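/- arXiv:2509.05159 — 8 statements merged into one kernel-verified Lean document; each statement's English description precedes it below -/
import Mathlib

section
/- Let κ > 0, T > 0, and let m₁, n₁, m₂, n₂ ∈ ℤ. Let h₁, h₂ : [0, π] × [0, T) → ℝ be continuous on [0, π] × [0, T) and twice continuously differentiable on (0, π) × (0, T), with boundary values hᵢ(0, t) = mᵢπ and hᵢ(π, t) = nᵢπ for all t ∈ [0, T) (i = 1, 2). Suppose h₁ satisfies ∂ₜh₁ = ∂θθh₁ + (cos θ / sin θ)·∂θh₁ − sin(2h₁)/(2 sin²θ) − (κ/2)·sin(2h₁ − 2θ) on (0, π) × (0, T), and h₂ satisfies the corresponding differential inequality ∂ₜh₂ ≥ ∂θθh₂ + (cos θ / sin θ)·∂θh₂ − sin(2h₂)/(2 sin²θ) − (κ/2)·sin(2h₂ − 2θ) on (0, π) × (0, T). If h₁(θ, 0) ≤ h₂(θ, 0) for all θ ∈ [0, π], then h₁(θ, t) ≤ h₂(θ, t) for all (θ, t) ∈ [0, π] × (0, T). -/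
/-!
Let `w = h₂ - h₁`. Subtracting the equations and using
`sin 2a - sin 2b = 2 sin (a - b) cos (a + b)`, the reaction terms contribute
`sin w · (cos (h₁ + h₂) / sin² θ + κ cos (h₁ + h₂ - 2θ))`, which is bounded by `c · |w|` as long
as `sin² θ` stays away from `0`. Near the poles this fails, but there the ordered boundary values
force `w ≥ 0`, and where `w` is slightly negative with `cos (h₁ + h₂) > 0` the singular term has the
good sign. Compactness of the remaining bad set therefore yields one constant `c` with
`∂ₜw ≥ c w` at every negative interior spatial minimum, and the minimum principle for
`exp (-c t) w + ε (t + 1)` gives `w ≥ 0`.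
-/

open Real Set Topology

theorem IsLocalMin.deriv_deriv_nonneg {f : ℝ → ℝ} {a : ℝ} (h : IsLocalMin f a)
    (hf : ContinuousAt f a) : 0 ≤ deriv (deriv f) a := by
  by_contra! hneg
  -- a negative second derivative would also make `a` a local maximum, so `f` is locally constant
  have hconst : f =ᶠ[𝓝 a] fun _ => f a :=
    (h.and (isLocalMax_of_deriv_deriv_neg hneg h.deriv_eq_zero hf)).mono
      fun x hx => le_antisymm hx.2 hx.1
  have hderiv : deriv f =ᶠ[𝓝 a] fun _ => 0 := by
    filter_upwards [hconst.eventuallyEq_nhds] with x hx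
    rw [hx.deriv_eq, deriv_const]
  rw [hderiv.deriv_eq, deriv_const] at hneg
  exact hneg.false

theorem IsLocalMin.deriv_eq_and_deriv_deriv_le {f g : ℝ → ℝ} {a : ℝ}
    (hf : ContDiffAt ℝ 2 f a) (hg : ContDiffAt ℝ 2 g a)
    (h : IsLocalMin (fun x => g x - f x) a) :
    deriv f a = deriv g a ∧ deriv (deriv f) a ≤ deriv (deriv g) a := by
  have h₁ := h.deriv_eq_zero
  have h₂ := h.deriv_deriv_nonneg (hg.continuousAt.sub hf.continuousAt)
  rw [deriv_fun_sub (hg.differentiableAt two_ne_zero) (hf.differentiableAt two_ne_zero)] at h₁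
  have hsub : deriv (deriv (fun x => g x - f x)) a = deriv (deriv g) a - deriv (deriv f) a := by
    simpa only [iteratedDeriv_eq_iterate, Function.iterate_succ, Function.iterate_zero,
      Function.comp_apply, Function.id_def] using iteratedDeriv_fun_sub hg hf
  rw [hsub] at h₂
  constructor <;> linarith

theorem HasDerivAt.nonpos_of_isMinOn_Icc {f : ℝ → ℝ} {f' a b : ℝ} (hf : HasDerivAt f f' b)
    (hab : a < b) (hmin : IsMinOn f (Icc a b) b) : f' ≤ 0 := by
  have hcone : a - b ∈ posTangentConeAt (Icc a b) b :=
    sub_mem_posTangentConeAt_of_segment_subset (by rw [segment_symm, segment_eq_Icc hab.le])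
  have := hmin.localize.hasFDerivWithinAt_nonneg hf.hasFDerivAt.hasFDerivWithinAt hcone
  simp only [ContinuousLinearMap.toSpanSingleton_apply, smul_eq_mul] at this
  exact nonpos_of_mul_nonneg_right this (sub_neg.2 hab)

section Curry

variable {𝕜 : Type*} [NontriviallyNormedField 𝕜] {E F G : Type*} [NormedAddCommGroup E]
  [NormedSpace 𝕜 E] [NormedAddCommGroup F] [NormedSpace 𝕜 F] [NormedAddCommGroup G]
  [NormedSpace 𝕜 G] {n : WithTop ℕ∞} {f : E → F → G} {x : E} {y : F}

theorem ContDiffAt.curry_left (hf : ContDiffAt 𝕜 n (Function.uncurry f) (x, y)) :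
    ContDiffAt 𝕜 n (fun x' => f x' y) x :=
  hf.comp x (contDiffAt_id.prodMk contDiffAt_const)

theorem ContDiffAt.curry_right (hf : ContDiffAt 𝕜 n (Function.uncurry f) (x, y)) :
    ContDiffAt 𝕜 n (fun y' => f x y') y :=
  hf.comp y (contDiffAt_const.prodMk contDiffAt_id)

end Curry

section MinimumPrinciple

variable {w : ℝ → ℝ → ℝ} {a b t₀ : ℝ}

theorem pos_of_hasDerivAt_pos_of_isMinOn
    (hw : ContinuousOn (Function.uncurry w) (Icc a b ×ˢ Icc 0 t₀))
    (h₀ : ∀ x ∈ Icc a b, 0 < w x 0)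
    (ha : ∀ t ∈ Icc 0 t₀, 0 < w a t) (hb : ∀ t ∈ Icc 0 t₀, 0 < w b t)
    (hmin : ∀ x ∈ Ioo a b, ∀ t ∈ Ioc 0 t₀, w x t ≤ 0 → IsMinOn (w · t) (Icc a b) x →
      ∃ d, HasDerivAt (w x ·) d t ∧ 0 < d) :
    ∀ x ∈ Icc a b, ∀ t ∈ Icc 0 t₀, 0 < w x t := by
  by_contra! hneg
  obtain ⟨x, hx, t, ht, hwxt⟩ := hneg
  -- the first time `t₁` at which `w` fails to be positive, and a minimum `x₀` of `w (·, t₁)`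
  obtain ⟨⟨x₁, t₁⟩, ⟨⟨hx₁, ht₁⟩, hw₁⟩, hfirst⟩ :=
    ((isCompact_Icc.prod isCompact_Icc).of_isClosed_subset
      (hw.preimage_isClosed_of_isClosed (isClosed_Icc.prod isClosed_Icc) isClosed_Iic)
      inter_subset_left).exists_isMinOn ⟨(x, t), ⟨hx, ht⟩, hwxt⟩ continuous_snd.continuousOn
  obtain ⟨x₀, hx₀, hx₀min⟩ := isCompact_Icc.exists_isMinOn ⟨x₁, hx₁⟩
    (hw.comp (Continuous.prodMk_left t₁).continuousOn fun x hx => ⟨hx, ht₁⟩)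
  have hw₀ : w x₀ t₁ ≤ 0 := (hx₀min hx₁).trans hw₁
  have hearlier : ∀ s ∈ Ico 0 t₁, 0 < w x₀ s := fun s hs => by
    by_contra! hs'
    exact (isMinOn_iff.1 hfirst (x₀, s) ⟨⟨hx₀, hs.1, hs.2.le.trans ht₁.2⟩, hs'⟩).not_gt hs.2
  have ht₁pos : 0 < t₁ := ht₁.1.lt_of_ne fun h => (h₀ x₀ hx₀).not_ge (h ▸ hw₀)
  have hx₀' : x₀ ∈ Ioo a b :=
    ⟨hx₀.1.lt_of_ne fun h => (ha t₁ ht₁).not_ge (h ▸ hw₀),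
      hx₀.2.lt_of_ne fun h => (hb t₁ ht₁).not_ge (h ▸ hw₀)⟩
  obtain ⟨d, hd, hd₀⟩ := hmin x₀ hx₀' t₁ ⟨ht₁pos, ht₁.2⟩ hw₀ hx₀min
  refine hd₀.not_ge (hd.nonpos_of_isMinOn_Icc ht₁pos <| isMinOn_iff.2 fun s hs => ?_)
  rcases hs.2.eq_or_lt with rfl | hlt
  exacts [le_rfl, hw₀.trans (hearlier s ⟨hs.1, hlt⟩).le]

theorem nonneg_of_hasDerivAt_nonneg_of_isMinOn
    (hw : ContinuousOn (Function.uncurry w) (Icc a b ×ˢ Icc 0 t₀))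
    (h₀ : ∀ x ∈ Icc a b, 0 ≤ w x 0)
    (ha : ∀ t ∈ Icc 0 t₀, 0 ≤ w a t) (hb : ∀ t ∈ Icc 0 t₀, 0 ≤ w b t)
    (hmin : ∀ x ∈ Ioo a b, ∀ t ∈ Ioc 0 t₀, w x t < 0 → IsMinOn (w · t) (Icc a b) x →
      ∃ d, HasDerivAt (w x ·) d t ∧ 0 ≤ d) :
    ∀ x ∈ Icc a b, ∀ t ∈ Icc 0 t₀, 0 ≤ w x t := by
  have hpos : ∀ ε > 0, ∀ x ∈ Icc a b, ∀ t ∈ Icc 0 t₀, 0 < w x t + ε * (t + 1) := by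
    intro ε hε
    refine pos_of_hasDerivAt_pos_of_isMinOn (hw.add (by fun_prop))
      (fun x hx => by simpa using add_pos_of_nonneg_of_pos (h₀ x hx) hε)
      (fun t ht => add_pos_of_nonneg_of_pos (ha t ht) (by have := ht.1; positivity))
      (fun t ht => add_pos_of_nonneg_of_pos (hb t ht) (by have := ht.1; positivity))
      fun x hx t ht hneg hmin' => ?_
    have hwneg : w x t < 0 := by nlinarith [ht.1]
    obtain ⟨d, hd, hd₀⟩ := hmin x hx t ht hwneg
      (isMinOn_iff.2 fun y hy => by simpa using isMinOn_iff.1 hmin' y hy)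
    exact ⟨d + ε, by simpa using hd.fun_add (((hasDerivAt_id t).add_const 1).const_mul ε),
      by linarith⟩
  intro x hx t ht
  refine le_of_forall_pos_lt_add fun ε hε => ?_
  have := hpos (ε / (t + 1)) (by have := ht.1; positivity) x hx t ht
  rwa [div_mul_cancel₀ _ (by linarith [ht.1])] at this

theorem nonneg_of_hasDerivAt_ge_mul_of_isMinOn {c : ℝ}
    (hw : ContinuousOn (Function.uncurry w) (Icc a b ×ˢ Icc 0 t₀))
    (h₀ : ∀ x ∈ Icc a b, 0 ≤ w x 0)
    (ha : ∀ t ∈ Icc 0 t₀, 0 ≤ w a t) (hb : ∀ t ∈ Icc 0 t₀, 0 ≤ w b t)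
    (hmin : ∀ x ∈ Ioo a b, ∀ t ∈ Ioc 0 t₀, w x t < 0 → IsMinOn (w · t) (Icc a b) x →
      ∃ d, HasDerivAt (w x ·) d t ∧ c * w x t ≤ d) :
    ∀ x ∈ Icc a b, ∀ t ∈ Icc 0 t₀, 0 ≤ w x t := by
  -- the weight `exp (-c t)` absorbs the zeroth-order term `c w`
  have hv := nonneg_of_hasDerivAt_nonneg_of_isMinOn (w := fun x t => exp (-c * t) * w x t)
    ((by fun_prop : Continuous fun p : ℝ × ℝ => exp (-c * p.2)).continuousOn.mul hw)
    (fun x hx => by simpa using h₀ x hx)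
    (fun t ht => mul_nonneg (exp_pos _).le (ha t ht))
    (fun t ht => mul_nonneg (exp_pos _).le (hb t ht))
    (fun x hx t ht hneg hvmin => by
      obtain ⟨d, hd, hcd⟩ := hmin x hx t ht (neg_of_mul_neg_right hneg (exp_pos _).le)
        (isMinOn_iff.2 fun y hy => le_of_mul_le_mul_left (isMinOn_iff.1 hvmin y hy) (exp_pos _))
      refine ⟨exp (-c * t) * (d - c * w x t), ?_, mul_nonneg (exp_pos _).le (sub_nonneg.2 hcd)⟩
      exact (((hasDerivAt_id' t).const_mul (-c)).exp.fun_mul hd).congr_deriv (by ring))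
  exact fun x hx t ht => (mul_nonneg_iff_of_pos_left (exp_pos _)).1 (hv x hx t ht)

end MinimumPrinciple

noncomputable def profileReaction (κ θ h : ℝ) : ℝ :=
  sin (2 * h) / (2 * sin θ ^ 2) + κ / 2 * sin (2 * h - 2 * θ)

-- spelled exactly as in the equation, so that its hypotheses are instances of it definitionally
noncomputable def profileHeatOperator (κ : ℝ) (h : ℝ → ℝ → ℝ) (θ t : ℝ) : ℝ :=
  deriv (deriv (fun x => h x t)) θ + (cos θ / sin θ) * deriv (fun x => h x t) θ
    - sin (2 * h θ t) / (2 * sin θ ^ 2) - (κ / 2) * sin (2 * h θ t - 2 * θ)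

theorem sin_sub_mul_cos_le {x y : ℝ} (hyx : y ≤ x) (c : ℝ) : sin (y - x) * cos c ≤ x - y :=
  calc sin (y - x) * cos c ≤ |sin (y - x)| * |cos c| := (le_abs_self _).trans (abs_mul _ _).le
    _ ≤ |y - x| := (mul_le_of_le_one_right (abs_nonneg _) (abs_cos_le_one c)).trans abs_sin_le_abs
    _ = x - y := by rw [abs_sub_comm, abs_of_nonneg (sub_nonneg.2 hyx)]

theorem profileReaction_sub (κ θ x y : ℝ) :
    profileReaction κ θ y - profileReaction κ θ x =
      sin (y - x) * (cos (x + y) / sin θ ^ 2 + κ * cos (x + y - 2 * θ)) := by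
  have h₁ := sin_sub_sin (2 * y) (2 * x)
  have h₂ := sin_sub_sin (2 * y - 2 * θ) (2 * x - 2 * θ)
  rw [show (2 * y - 2 * x) / 2 = y - x by ring, show (2 * y + 2 * x) / 2 = x + y by ring] at h₁
  rw [show (2 * y - 2 * θ - (2 * x - 2 * θ)) / 2 = y - x by ring,
    show (2 * y - 2 * θ + (2 * x - 2 * θ)) / 2 = x + y - 2 * θ by ring] at h₂
  calc profileReaction κ θ y - profileReaction κ θ x
      = (sin (2 * y) - sin (2 * x)) / (2 * sin θ ^ 2)
        + κ / 2 * (sin (2 * y - 2 * θ) - sin (2 * x - 2 * θ)) := by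
        unfold profileReaction; ring
    _ = _ := by rw [h₁, h₂]; ring

theorem profileReaction_sub_le {κ x y : ℝ} (θ : ℝ) (hκ : 0 ≤ κ) (hyx : y ≤ x) :
    profileReaction κ θ y - profileReaction κ θ x ≤ (1 / sin θ ^ 2 + κ) * (x - y) := by
  have hsingular : sin (y - x) * (cos (x + y) / sin θ ^ 2) ≤ 1 / sin θ ^ 2 * (x - y) := by
    rw [mul_div_assoc', one_div_mul_eq_div]
    exact div_le_div_of_nonneg_right (sin_sub_mul_cos_le hyx _) (sq_nonneg _)
  have hregular : sin (y - x) * (κ * cos (x + y - 2 * θ)) ≤ κ * (x - y) := by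
    rw [mul_left_comm]
    exact mul_le_mul_of_nonneg_left (sin_sub_mul_cos_le hyx _) hκ
  rw [profileReaction_sub, mul_add, add_mul]
  exact add_le_add hsingular hregular

theorem profileReaction_sub_le_of_cos_pos {κ x y : ℝ} (θ : ℝ) (hκ : 0 ≤ κ) (hyx : y < x)
    (hxy : x - y < π) (hcos : 0 < cos (x + y)) :
    profileReaction κ θ y - profileReaction κ θ x ≤ κ * (x - y) := by
  have hsin : sin (y - x) < 0 := sin_neg_of_neg_of_neg_pi_lt (by linarith) (by linarith)
  have hsingular : sin (y - x) * (cos (x + y) / sin θ ^ 2) ≤ 0 :=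
    mul_nonpos_of_nonpos_of_nonneg hsin.le (by positivity)
  have hregular : sin (y - x) * (κ * cos (x + y - 2 * θ)) ≤ κ * (x - y) := by
    rw [mul_left_comm]
    exact mul_le_mul_of_nonneg_left (sin_sub_mul_cos_le hyx.le _) hκ
  rw [profileReaction_sub, mul_add]
  linarith

theorem exists_pos_forall_le_sin_sq {S : Set ℝ} (hS : IsCompact S)
    {x y : ℝ → ℝ → ℝ} (hx : ContinuousOn (Function.uncurry x) (Icc 0 π ×ˢ S))
    (hy : ContinuousOn (Function.uncurry y) (Icc 0 π ×ˢ S))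
    (hpole : ∀ θ ∈ ({0, π} : Set ℝ), ∀ s ∈ S, x θ s ≤ y θ s ∧ ∃ n : ℤ, x θ s = n * π) :
    ∃ δ > 0, ∀ θ ∈ Icc 0 π, ∀ s ∈ S, y θ s ≤ x θ s →
      (cos (x θ s + y θ s) ≤ 0 ∨ 1 ≤ x θ s - y θ s) → δ ≤ sin θ ^ 2 := by
  set K := Icc 0 π ×ˢ S
  have hK : IsCompact K := isCompact_Icc.prod hS
  set B := {p ∈ K | y p.1 p.2 ≤ x p.1 p.2 ∧
    (cos (x p.1 p.2 + y p.1 p.2) ≤ 0 ∨ 1 ≤ x p.1 p.2 - y p.1 p.2)}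
  have hB : IsCompact B := by
    have hw := hx.sub hy
    have hc := continuous_cos.comp_continuousOn (hx.add hy)
    refine hK.of_isClosed_subset ?_ fun p hp => hp.1
    convert (hw.preimage_isClosed_of_isClosed hK.isClosed (isClosed_Ici (a := 0))).inter
      ((hc.preimage_isClosed_of_isClosed hK.isClosed isClosed_Iic).union
        (hw.preimage_isClosed_of_isClosed hK.isClosed isClosed_Ici)) using 1
    ext p
    simp only [B, mem_ofPred_eq, mem_inter_iff, mem_union, mem_preimage, mem_Ici, mem_Iic,
      Function.comp_apply, Function.uncurry_def, sub_nonneg, Pi.sub_apply, Pi.add_apply]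
    tauto
  -- at a pole, `y ≤ x` forces `x = y ∈ πℤ`, so `cos (x + y) = 1` and `x - y = 0`
  have hBsin : ∀ p ∈ B, 0 < sin p.1 ^ 2 := by
    rintro ⟨θ, s⟩ ⟨⟨hθ, hs⟩, hyx, hbad⟩
    have hθ' : θ ∉ ({0, π} : Set ℝ) := fun hθ' => by
      obtain ⟨hxy, n, hn⟩ := hpole θ hθ' s hs
      have hcos : cos (x θ s + y θ s) = 1 := by
        rw [show y θ s = x θ s by linarith, hn, ← two_mul, ← mul_assoc, mul_comm 2, mul_assoc]
        exact cos_int_mul_two_pi n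
      rcases hbad with h | h <;> linarith
    simp only [mem_insert_iff, mem_singleton_iff, not_or] at hθ'
    exact pow_pos (sin_pos_of_pos_of_lt_pi (hθ.1.lt_of_ne' hθ'.1) (hθ.2.lt_of_ne hθ'.2)) 2
  obtain ⟨δ, hδ, hδB⟩ : ∃ δ > 0, ∀ p ∈ B, δ ≤ sin p.1 ^ 2 :=
    hB.exists_forall_le' (by fun_prop) hBsin
  exact ⟨δ, hδ, fun θ hθ s hs hyx hbad => hδB (θ, s) ⟨⟨hθ, hs⟩, hyx, hbad⟩⟩

theorem exists_profileReaction_sub_le {κ : ℝ} (hκ : 0 ≤ κ) {S : Set ℝ} (hS : IsCompact S)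
    {x y : ℝ → ℝ → ℝ} (hx : ContinuousOn (Function.uncurry x) (Icc 0 π ×ˢ S))
    (hy : ContinuousOn (Function.uncurry y) (Icc 0 π ×ˢ S))
    (hpole : ∀ θ ∈ ({0, π} : Set ℝ), ∀ s ∈ S, x θ s ≤ y θ s ∧ ∃ n : ℤ, x θ s = n * π) :
    ∃ c, ∀ θ ∈ Icc 0 π, ∀ s ∈ S, y θ s < x θ s →
      profileReaction κ θ (y θ s) - profileReaction κ θ (x θ s) ≤ c * (x θ s - y θ s) := by
  obtain ⟨δ, hδ, hδle⟩ := exists_pos_forall_le_sin_sq hS hx hy hpole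
  refine ⟨1 / δ + κ, fun θ hθ s hs hyx => ?_⟩
  by_cases hbad : cos (x θ s + y θ s) ≤ 0 ∨ 1 ≤ x θ s - y θ s
  · refine (profileReaction_sub_le θ hκ hyx.le).trans ?_
    have : 1 / sin θ ^ 2 ≤ 1 / δ := one_div_le_one_div_of_le hδ (hδle θ hθ s hs hyx.le hbad)
    gcongr
  · simp only [not_or, not_le] at hbad
    refine (profileReaction_sub_le_of_cos_pos θ hκ hyx (by linarith [pi_gt_three]) hbad.1).trans ?_
    exact mul_le_mul_of_nonneg_right (le_add_of_nonneg_left (by positivity)) (by linarith)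

theorem exists_hasDerivAt_profileReaction_sub_le_of_isLocalMin {κ θ t : ℝ}
    {h₁ h₂ : ℝ → ℝ → ℝ}
    (hC₁ : ContDiffAt ℝ 2 (Function.uncurry h₁) (θ, t))
    (hC₂ : ContDiffAt ℝ 2 (Function.uncurry h₂) (θ, t))
    (hsub : deriv (h₁ θ ·) t ≤ profileHeatOperator κ h₁ θ t)
    (hsuper : profileHeatOperator κ h₂ θ t ≤ deriv (h₂ θ ·) t)
    (hmin : IsLocalMin (fun x => h₂ x t - h₁ x t) θ) :
    ∃ d, HasDerivAt (fun s => h₂ θ s - h₁ θ s) d t ∧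
      profileReaction κ θ (h₁ θ t) - profileReaction κ θ (h₂ θ t) ≤ d := by
  obtain ⟨hd₁, hd₂⟩ := hmin.deriv_eq_and_deriv_deriv_le hC₁.curry_left hC₂.curry_left
  refine ⟨_, ((hC₂.curry_right.differentiableAt two_ne_zero).hasDerivAt.sub
    (hC₁.curry_right.differentiableAt two_ne_zero).hasDerivAt), ?_⟩
  unfold profileHeatOperator at hsub hsuper
  unfold profileReaction
  rw [hd₁] at hsub
  linarith

theorem le_of_profileHeatOperator_of_profileReaction_sub_le {κ T t₀ c : ℝ}
    {h₁ h₂ : ℝ → ℝ → ℝ} (ht₀ : t₀ < T)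
    (hcont : ContinuousOn (Function.uncurry fun x t => h₂ x t - h₁ x t) (Icc 0 π ×ˢ Icc 0 t₀))
    (hC₁ : ContDiffOn ℝ 2 (Function.uncurry h₁) (Ioo 0 π ×ˢ Ioo 0 T))
    (hC₂ : ContDiffOn ℝ 2 (Function.uncurry h₂) (Ioo 0 π ×ˢ Ioo 0 T))
    (hsub : ∀ θ ∈ Ioo 0 π, ∀ t ∈ Ioo 0 T, deriv (h₁ θ ·) t ≤ profileHeatOperator κ h₁ θ t)
    (hsuper : ∀ θ ∈ Ioo 0 π, ∀ t ∈ Ioo 0 T, profileHeatOperator κ h₂ θ t ≤ deriv (h₂ θ ·) t)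
    (hc : ∀ θ ∈ Ioo 0 π, ∀ t ∈ Ioc 0 t₀, h₂ θ t < h₁ θ t →
      profileReaction κ θ (h₂ θ t) - profileReaction κ θ (h₁ θ t) ≤ c * (h₁ θ t - h₂ θ t))
    (h₀ : ∀ θ ∈ Icc 0 π, h₁ θ 0 ≤ h₂ θ 0)
    (hpole : ∀ x ∈ ({0, π} : Set ℝ), ∀ t ∈ Icc 0 t₀, h₁ x t ≤ h₂ x t) :
    ∀ θ ∈ Icc 0 π, ∀ t ∈ Icc 0 t₀, h₁ θ t ≤ h₂ θ t := by
  refine fun θ hθ t ht => sub_nonneg.1 <| nonneg_of_hasDerivAt_ge_mul_of_isMinOn (c := c) hcont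
    (fun x hx => sub_nonneg.2 (h₀ x hx)) (fun s hs => sub_nonneg.2 (hpole 0 (by simp) s hs))
    (fun s hs => sub_nonneg.2 (hpole π (by simp) s hs)) (fun x hx s hs hneg hmin => ?_) θ hθ t ht
  have hs' : s ∈ Ioo 0 T := ⟨hs.1, hs.2.trans_lt ht₀⟩
  have hnhds : Ioo 0 π ×ˢ Ioo 0 T ∈ 𝓝 (x, s) :=
    prod_mem_nhds (Ioo_mem_nhds hx.1 hx.2) (Ioo_mem_nhds hs'.1 hs'.2)
  obtain ⟨d, hd, hRd⟩ := exists_hasDerivAt_profileReaction_sub_le_of_isLocalMin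
    (hC₁.contDiffAt hnhds) (hC₂.contDiffAt hnhds) (hsub x hx s hs') (hsuper x hx s hs')
    (hmin.isLocalMin (Icc_mem_nhds hx.1 hx.2))
  have := hc x hx s hs (sub_neg.1 hneg)
  exact ⟨d, hd, by linarith⟩

theorem comparison_principle_profiles_general
    (κ T : ℝ) (hκ : 0 < κ)
    (m₁ n₁ m₂ n₂ : ℤ) (h₁ h₂ : ℝ → ℝ → ℝ)
    -- continuity on [0,π] × [0,T)
    (hcont₁ : ContinuousOn (Function.uncurry h₁) (Set.Icc 0 π ×ˢ Set.Ico 0 T))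
    (hcont₂ : ContinuousOn (Function.uncurry h₂) (Set.Icc 0 π ×ˢ Set.Ico 0 T))
    -- twice continuous differentiability on (0,π) × (0,T)
    (hC2₁ : ContDiffOn ℝ 2 (Function.uncurry h₁) (Set.Ioo 0 π ×ˢ Set.Ioo 0 T))
    (hC2₂ : ContDiffOn ℝ 2 (Function.uncurry h₂) (Set.Ioo 0 π ×ˢ Set.Ioo 0 T))
    -- boundary values
    (hbd₁0 : ∀ t ∈ Set.Ico (0 : ℝ) T, h₁ 0 t = (m₁ : ℝ) * π)
    (hbd₁π : ∀ t ∈ Set.Ico (0 : ℝ) T, h₁ π t = (n₁ : ℝ) * π)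
    (hbd₂0 : ∀ t ∈ Set.Ico (0 : ℝ) T, h₂ 0 t = (m₂ : ℝ) * π)
    (hbd₂π : ∀ t ∈ Set.Ico (0 : ℝ) T, h₂ π t = (n₂ : ℝ) * π)
    -- h₁ solves the profile heat equation
    (heq : ∀ θ ∈ Set.Ioo (0 : ℝ) π, ∀ t ∈ Set.Ioo (0 : ℝ) T,
      deriv (fun s => h₁ θ s) t =
        deriv (deriv (fun x => h₁ x t)) θ
        + (Real.cos θ / Real.sin θ) * deriv (fun x => h₁ x t) θ
        - Real.sin (2 * h₁ θ t) / (2 * Real.sin θ ^ 2)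
        - (κ / 2) * Real.sin (2 * h₁ θ t - 2 * θ))
    -- h₂ is a supersolution
    (hineq : ∀ θ ∈ Set.Ioo (0 : ℝ) π, ∀ t ∈ Set.Ioo (0 : ℝ) T,
      deriv (fun s => h₂ θ s) t ≥
        deriv (deriv (fun x => h₂ x t)) θ
        + (Real.cos θ / Real.sin θ) * deriv (fun x => h₂ x t) θ
        - Real.sin (2 * h₂ θ t) / (2 * Real.sin θ ^ 2)
        - (κ / 2) * Real.sin (2 * h₂ θ t - 2 * θ))
    -- ordered initial data
    (hinit : ∀ θ ∈ Set.Icc (0 : ℝ) π, h₁ θ 0 ≤ h₂ θ 0) :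
    ∀ θ ∈ Set.Icc (0 : ℝ) π, ∀ t ∈ Set.Ioo (0 : ℝ) T, h₁ θ t ≤ h₂ θ t := by
  intro θ hθ t ht
  have hK : Icc 0 π ×ˢ Icc 0 t ⊆ Icc 0 π ×ˢ Ico 0 T := prod_mono le_rfl (Icc_subset_Ico_right ht.2)
  have hIco : ∀ s ∈ Icc 0 t, s ∈ Ico 0 T := fun s hs => ⟨hs.1, hs.2.trans_lt ht.2⟩
  have h₀ : (0 : ℝ) ∈ Icc 0 t := left_mem_Icc.2 ht.1.le
  have hpole : ∀ x ∈ ({0, π} : Set ℝ), ∀ s ∈ Icc 0 t,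
      h₁ x s ≤ h₂ x s ∧ ∃ n : ℤ, h₁ x s = n * π := by
    rintro x (rfl | rfl) s hs
    · have := hinit 0 (left_mem_Icc.2 pi_pos.le)
      rw [hbd₁0 0 (hIco 0 h₀), hbd₂0 0 (hIco 0 h₀)] at this
      rw [hbd₁0 s (hIco s hs), hbd₂0 s (hIco s hs)]
      exact ⟨this, m₁, rfl⟩
    · have := hinit π (right_mem_Icc.2 pi_pos.le)
      rw [hbd₁π 0 (hIco 0 h₀), hbd₂π 0 (hIco 0 h₀)] at this
      rw [hbd₁π s (hIco s hs), hbd₂π s (hIco s hs)]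
      exact ⟨this, n₁, rfl⟩
  obtain ⟨c, hc⟩ := exists_profileReaction_sub_le hκ.le isCompact_Icc (hcont₁.mono hK)
    (hcont₂.mono hK) hpole
  exact le_of_profileHeatOperator_of_profileReaction_sub_le ht.2
    ((hcont₂.mono hK).sub (hcont₁.mono hK)) hC2₁ hC2₂ (fun x hx s hs => (heq x hx s hs).le) hineq
    (fun x hx s hs => hc x (Ioo_subset_Icc_self hx) s (Ioc_subset_Icc_self hs)) hinit
    (fun x hx s hs => (hpole x hx s hs).1) θ hθ t ⟨ht.1.le, le_rfl⟩

/-- Comparison principle for the axisymmetric skyrmionic map heat flow: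
    if h₁ is a solution and h₂ is a supersolution of the profile heat equation,
    with ordered initial data, then they stay ordered for all times. -/
theorem comparison_principle_profiles
    (κ T : ℝ) (hκ : 0 < κ) (hT : 0 < T)
    (m₁ n₁ m₂ n₂ : ℤ) (h₁ h₂ : ℝ → ℝ → ℝ)
    -- continuity on [0,π] × [0,T)
    (hcont₁ : ContinuousOn (Function.uncurry h₁) (Set.Icc 0 π ×ˢ Set.Ico 0 T))
    (hcont₂ : ContinuousOn (Function.uncurry h₂) (Set.Icc 0 π ×ˢ Set.Ico 0 T))
    -- twice continuous differentiability on (0,π) × (0,T)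
    (hC2₁ : ContDiffOn ℝ 2 (Function.uncurry h₁) (Set.Ioo 0 π ×ˢ Set.Ioo 0 T))
    (hC2₂ : ContDiffOn ℝ 2 (Function.uncurry h₂) (Set.Ioo 0 π ×ˢ Set.Ioo 0 T))
    -- boundary values
    (hbd₁0 : ∀ t ∈ Set.Ico (0 : ℝ) T, h₁ 0 t = (m₁ : ℝ) * π)
    (hbd₁π : ∀ t ∈ Set.Ico (0 : ℝ) T, h₁ π t = (n₁ : ℝ) * π)
    (hbd₂0 : ∀ t ∈ Set.Ico (0 : ℝ) T, h₂ 0 t = (m₂ : ℝ) * π)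
    (hbd₂π : ∀ t ∈ Set.Ico (0 : ℝ) T, h₂ π t = (n₂ : ℝ) * π)
    -- h₁ solves the profile heat equation
    (heq : ∀ θ ∈ Set.Ioo (0 : ℝ) π, ∀ t ∈ Set.Ioo (0 : ℝ) T,
      deriv (fun s => h₁ θ s) t =
        deriv (deriv (fun x => h₁ x t)) θ
        + (Real.cos θ / Real.sin θ) * deriv (fun x => h₁ x t) θ
        - Real.sin (2 * h₁ θ t) / (2 * Real.sin θ ^ 2)
        - (κ / 2) * Real.sin (2 * h₁ θ t - 2 * θ))
    -- h₂ is a supersolution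
    (hineq : ∀ θ ∈ Set.Ioo (0 : ℝ) π, ∀ t ∈ Set.Ioo (0 : ℝ) T,
      deriv (fun s => h₂ θ s) t ≥
        deriv (deriv (fun x => h₂ x t)) θ
        + (Real.cos θ / Real.sin θ) * deriv (fun x => h₂ x t) θ
        - Real.sin (2 * h₂ θ t) / (2 * Real.sin θ ^ 2)
        - (κ / 2) * Real.sin (2 * h₂ θ t - 2 * θ))
    -- ordered initial data
    (hinit : ∀ θ ∈ Set.Icc (0 : ℝ) π, h₁ θ 0 ≤ h₂ θ 0) :
    ∀ θ ∈ Set.Icc (0 : ℝ) π, ∀ t ∈ Set.Ioo (0 : ℝ) T, h₁ θ t ≤ h₂ θ t :=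
  comparison_principle_profiles_general κ T hκ m₁ n₁ m₂ n₂ h₁ h₂ hcont₁ hcont₂ hC2₁ hC2₂ hbd₁0 hbd₁π
    hbd₂0 hbd₂π heq hineq hinit
end

section
/- For all κ ≥ 4 and all (x, y) ∈ ℝ² with 0 ≤ x ≤ π/2 and x ≤ y ≤ 2x, one has sin(2x) − sin(2y) − κ·sin(2y − 2x)·sin²x ≤ 0. -/
open Real Set

/-- For κ ≥ 4, the function f(x,y) = sin 2x − sin 2y − κ sin(2y−2x) sin²x
    is nonpositive on the wedge W₂ = {0 ≤ x ≤ π/2, x ≤ y ≤ 2x}. -/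
theorem f_nonpos_on_W2 (κ x y : ℝ) (hκ : 4 ≤ κ)
    (hx0 : 0 ≤ x) (hx1 : x ≤ π / 2) (hy0 : x ≤ y) (hy1 : y ≤ 2 * x) :
    Real.sin (2 * x) - Real.sin (2 * y)
      - κ * Real.sin (2 * y - 2 * x) * Real.sin x ^ 2 ≤ 0 := by
  set t := y - x with ht
  have hπ := Real.pi_pos
  have ht0 : 0 ≤ t := by simp [ht]; linarith
  have htx : t ≤ x := by simp [ht]; linarith
  have hst : 0 ≤ Real.sin t :=
    Real.sin_nonneg_of_nonneg_of_le_pi ht0 (by linarith)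
  have hsx : 0 ≤ Real.sin x :=
    Real.sin_nonneg_of_nonneg_of_le_pi hx0 (by linarith)
  have hcx : 0 ≤ Real.cos x :=
    Real.cos_nonneg_of_mem_Icc ⟨by linarith, hx1⟩
  have hct : Real.cos x ≤ Real.cos t :=
    Real.cos_le_cos_of_nonneg_of_le_pi ht0 (by linarith) htx
  have hsxt : 0 ≤ Real.sin (x - t) :=
    Real.sin_nonneg_of_nonneg_of_le_pi (by linarith) (by linarith)
  have hcross : Real.sin t * Real.cos x ≤ Real.sin x * Real.cos t := by
    rw [Real.sin_sub] at hsxt; linarith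
  have hsx1 : Real.sin x ≤ 1 := Real.sin_le_one x
  have e1 : Real.sin (2 * x) - Real.sin (2 * y)
      = -2 * Real.sin t * Real.cos (x + y) := by
    rw [Real.sin_sub_sin]
    have h1 : (2 * x - 2 * y) / 2 = -t := by ring
    have h2 : (2 * x + 2 * y) / 2 = x + y := by ring
    rw [h1, h2, Real.sin_neg]; ring
  have e2 : Real.sin (2 * y - 2 * x) = 2 * Real.sin t * Real.cos t := by
    have : 2 * y - 2 * x = t + t := by ring
    rw [this, Real.sin_add]; ring
  have e3 : Real.cos (x + y) = Real.cos (2 * x) * Real.cos t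
      - Real.sin (2 * x) * Real.sin t := by
    have : x + y = 2 * x + t := by ring
    rw [this, Real.cos_add]
  have e4 : Real.cos (2 * x) = 1 - 2 * Real.sin x ^ 2 := by
    have := Real.sin_sq_add_cos_sq x
    rw [Real.cos_two_mul']; linarith
  have e5 : Real.sin (2 * x) = 2 * Real.sin x * Real.cos x := Real.sin_two_mul x
  rw [e1, e2, e3, e4, e5]
  have hct0 : 0 ≤ Real.cos t := le_trans hcx hct
  nlinarith [mul_nonneg hst hct0, mul_nonneg hst hsx,
    mul_nonneg (mul_nonneg hst hst) (mul_nonneg hsx hcx),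
    mul_nonneg (mul_nonneg hst hsx) (sub_nonneg.2 hcross),
    mul_nonneg (mul_nonneg (mul_nonneg hst hsx) hsx) (sub_nonneg.2 hct),
    sq_nonneg (Real.sin x), mul_nonneg hst (mul_nonneg (mul_nonneg hsx hsx) hct0)]
end

section
/- For all κ ≥ 4 and all (x, y) ∈ ℝ² with 0 ≤ x ≤ π/4 and π ≤ y ≤ π + x, one has cos(2x) − cos(2y) − κ·sin(2y − 2x)·sin x·cos x ≥ 0. -/
open Real Set

/-- For κ ≥ 4, the function λ(x,y) = cos 2x − cos 2y − κ sin(2y−2x) sin x cos x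
    is nonnegative on W₁ ∩ {0 ≤ x ≤ π/4}. -/
theorem lambda_nonneg_on_W1_quarter (κ x y : ℝ) (hκ : 4 ≤ κ)
    (hx0 : 0 ≤ x) (hx1 : x ≤ π / 4) (hy0 : π ≤ y) (hy1 : y ≤ π + x) :
    0 ≤ Real.cos (2 * x) - Real.cos (2 * y)
        - κ * Real.sin (2 * y - 2 * x) * Real.sin x * Real.cos x := by
  obtain ⟨t, rfl⟩ : ∃ t, y = t + π := ⟨y - π, by ring⟩
  have ht0 : 0 ≤ t := by linarith
  have ht1 : t ≤ x := by linarith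
  have hπ := Real.pi_pos
  have e1 : Real.cos (2 * (t + π)) = Real.cos (2 * t) := by
    rw [show 2 * (t + π) = 2 * t + 2 * π by ring, Real.cos_add_two_pi]
  have e2 : Real.sin (2 * (t + π) - 2 * x) = Real.sin (2 * t - 2 * x) := by
    rw [show 2 * (t + π) - 2 * x = (2 * t - 2 * x) + 2 * π by ring, Real.sin_add_two_pi]
  rw [e1, e2]
  have h1 : Real.cos (2 * x) - Real.cos (2 * t)
      = -2 * Real.sin (x + t) * Real.sin (x - t) := by
    have h := Real.cos_sub_cos (2 * x) (2 * t)
    rw [show (2 * x + 2 * t) / 2 = x + t by ring,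
        show (2 * x - 2 * t) / 2 = x - t by ring] at h
    exact h
  have h2 : Real.sin (3 * x - t) + Real.sin (x + t)
      = 2 * Real.sin (2 * x) * Real.cos (x - t) := by
    have a1 : Real.sin (3 * x - t)
        = Real.sin (2 * x) * Real.cos (x - t) + Real.cos (2 * x) * Real.sin (x - t) := by
      rw [show 3 * x - t = 2 * x + (x - t) by ring, Real.sin_add]
    have a2 : Real.sin (x + t)
        = Real.sin (2 * x) * Real.cos (x - t) - Real.cos (2 * x) * Real.sin (x - t) := by
      rw [show x + t = 2 * x - (x - t) by ring, Real.sin_sub]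
    rw [a1, a2]; ring
  have h3 : Real.sin (2 * t - 2 * x) = -(2 * Real.sin (x - t) * Real.cos (x - t)) := by
    rw [show 2 * t - 2 * x = -(2 * (x - t)) by ring, Real.sin_neg, Real.sin_two_mul]
  have h4 := Real.sin_two_mul x
  have key : Real.cos (2 * x) - Real.cos (2 * t)
      - κ * Real.sin (2 * t - 2 * x) * Real.sin x * Real.cos x
      = Real.sin (x - t) * (κ / 2 * Real.sin (3 * x - t)
        + (κ / 2 - 2) * Real.sin (x + t)) := by
    linear_combination h1 - (κ * Real.sin x * Real.cos x) * h3
      - (κ / 2 * Real.sin (x - t)) * h2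
      - (κ * Real.sin (x - t) * Real.cos (x - t)) * h4
  rw [key]
  have s1 : 0 ≤ Real.sin (x - t) :=
    Real.sin_nonneg_of_nonneg_of_le_pi (by linarith) (by linarith)
  have s2 : 0 ≤ Real.sin (3 * x - t) :=
    Real.sin_nonneg_of_nonneg_of_le_pi (by linarith) (by linarith)
  have s3 : 0 ≤ Real.sin (x + t) :=
    Real.sin_nonneg_of_nonneg_of_le_pi (by linarith) (by linarith)
  have := add_nonneg (mul_nonneg (by linarith : (0:ℝ) ≤ κ / 2) s2)
    (mul_nonneg (by linarith : (0:ℝ) ≤ κ / 2 - 2) s3)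
  exact mul_nonneg s1 this
end

section
/- For all κ ≥ 4 and all (x, y) ∈ ℝ² with 0 ≤ x ≤ π/2 and x ≤ y ≤ 2x, one has cos(2x) − cos(2y) − κ·sin(2y − 2x)·sin x·cos x ≤ 0. -/
open Real Set

/-- For κ ≥ 4, the function λ(x,y) = cos 2x − cos 2y − κ sin(2y−2x) sin x cos x
    is nonpositive on the wedge W₂ = {0 ≤ x ≤ π/2, x ≤ y ≤ 2x}. -/
theorem lambda_nonpos_on_W2 (κ x y : ℝ) (hκ : 4 ≤ κ)
    (hx0 : 0 ≤ x) (hx1 : x ≤ π / 2) (hy0 : x ≤ y) (hy1 : y ≤ 2 * x) :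
    Real.cos (2 * x) - Real.cos (2 * y)
      - κ * Real.sin (2 * y - 2 * x) * Real.sin x * Real.cos x ≤ 0 := by
  have hpi := Real.pi_pos
  have hsyx : 0 ≤ Real.sin (y - x) :=
    Real.sin_nonneg_of_nonneg_of_le_pi (by linarith) (by linarith)
  have hcyx : 0 ≤ Real.cos (y - x) :=
    Real.cos_nonneg_of_mem_Icc ⟨by linarith, by linarith⟩
  have hsx : 0 ≤ Real.sin x :=
    Real.sin_nonneg_of_nonneg_of_le_pi hx0 (by linarith)
  have hcx : 0 ≤ Real.cos x :=
    Real.cos_nonneg_of_mem_Icc ⟨by linarith, hx1⟩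
  have hs3 : 0 ≤ Real.sin (3 * x - y) :=
    Real.sin_nonneg_of_nonneg_of_le_pi (by linarith) (by linarith)
  have h1 : Real.cos (2 * x) - Real.cos (2 * y)
      = 2 * Real.sin (x + y) * Real.sin (y - x) := by
    rw [Real.cos_sub_cos]
    have e1 : (2 * x + 2 * y) / 2 = x + y := by ring
    have e2 : (2 * x - 2 * y) / 2 = -(y - x) := by ring
    rw [e1, e2, Real.sin_neg]
    ring
  have h2 : Real.sin (x + y) + Real.sin (3 * x - y)
      = 2 * Real.sin (2 * x) * Real.cos (y - x) := by
    have e1 : x + y = 2 * x + (y - x) := by ring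
    have e2 : 3 * x - y = 2 * x - (y - x) := by ring
    rw [e1, e2, Real.sin_add (2 * x) (y - x), Real.sin_sub (2 * x) (y - x)]
    ring
  have h3 : Real.sin (2 * y - 2 * x) = 2 * Real.sin (y - x) * Real.cos (y - x) := by
    rw [show 2 * y - 2 * x = 2 * (y - x) by ring, Real.sin_two_mul]
  have h4 : Real.sin (2 * x) = 2 * Real.sin x * Real.cos x := Real.sin_two_mul x
  have h5 : Real.sin (x + y)
      = 4 * (Real.cos (y - x) * Real.sin x * Real.cos x) - Real.sin (3 * x - y) := by
    rw [h4] at h2; linarith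
  have key : Real.cos (2 * x) - Real.cos (2 * y)
      - κ * Real.sin (2 * y - 2 * x) * Real.sin x * Real.cos x
      = -2 * (Real.sin (y - x) * ((κ - 4) * Real.cos (y - x) * Real.sin x * Real.cos x
          + Real.sin (3 * x - y))) := by
    rw [h1, h3, h5]; ring
  have hP : 0 ≤ Real.sin (y - x) * ((κ - 4) * Real.cos (y - x) * Real.sin x * Real.cos x
      + Real.sin (3 * x - y)) :=
    mul_nonneg hsyx (add_nonneg (mul_nonneg (mul_nonneg (mul_nonneg
      (by linarith : (0:ℝ) ≤ κ - 4) hcyx) hsx) hcx) hs3)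
  linarith [key, hP]
end

section
/- Let κ ≥ 4 and let h : [0, π] → ℝ be continuously differentiable on [0, π] and twice differentiable on (0, π), solving the profile equation h''(θ) + (cos θ / sin θ)·h'(θ) − sin(2h(θ))/(2 sin²θ) − (κ/2)·sin(2h(θ) − 2θ) = 0 on (0, π). Assume h is hemispheric of type (1,1), i.e. h(0) = h(π) = π and h(θ) + h(π − θ) = 2π for all θ ∈ [0, π], and that h satisfies the wedge condition π ≤ h(θ) ≤ π + θ for all θ ∈ [0, π/2]. Then h'(θ) ≤ 1 for all θ ∈ [0, π]. -/
/-!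
Along a solution of the profile equation, `G t = sin t * (h' t - 1)` has derivative
`profileDrift κ t (h t)`, and with `φ = h t - t` one has
`sin t * G' t = sin φ * (cos φ * (1 + (κ - 2) * sin t ^ 2) - 2 * sin φ * cos t * sin t)`.
On `(0, π/2]` the wedge condition places `φ` in `[π/2, π]`, so `sin φ ≥ 0 ≥ cos φ` and `G' ≤ 0`
as soon as `κ ≥ 2`. Since `G 0 = 0`, `G ≤ 0` there, i.e. `h' ≤ 1`. The symmetry
`h θ + h (π - θ) = 2π` makes `h'` symmetric about `π/2`, and continuity of `h'` up to the
boundary gives the endpoints.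
-/

open Real Set Filter Topology

def SolvesProfileEquationAt (κ : ℝ) (h : ℝ → ℝ) (θ : ℝ) : Prop :=
  deriv (deriv h) θ + (cos θ / sin θ) * deriv h θ
    - sin (2 * h θ) / (2 * sin θ ^ 2) - (κ / 2) * sin (2 * h θ - 2 * θ) = 0

/-- The derivative of `t ↦ sin t * (h' t - 1)` along a solution of the profile equation,
written in terms of `y = h t`. -/
noncomputable def profileDrift (κ t y : ℝ) : ℝ :=
  -cos t + sin (2 * y) / (2 * sin t) + κ / 2 * sin t * sin (2 * y - 2 * t)

lemma sin_mul_profileDrift {κ t y : ℝ} (hs : sin t ≠ 0) :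
    sin t * profileDrift κ t y = sin (y - t) *
      (cos (y - t) * (1 + (κ - 2) * sin t ^ 2) - 2 * sin (y - t) * cos t * sin t) := by
  have hy : y = (y - t) + t := by ring
  rw [profileDrift, hy, show 2 * (y - t + t) - 2 * t = 2 * (y - t) by ring,
    show 2 * (y - t + t) = 2 * (y - t) + 2 * t by ring, add_sub_cancel_right,
    sin_add, sin_two_mul, sin_two_mul, cos_two_mul, cos_two_mul, cos_sq']
  field_simp
  linear_combination 2 * sin t * cos t * sin_sq_add_cos_sq (y - t)

lemma profileDrift_nonpos {κ t y : ℝ} (hκ : 2 ≤ κ) (ht : t ∈ Ioc 0 (π / 2))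
    (hy : y ∈ Icc π (π + t)) : profileDrift κ t y ≤ 0 := by
  have hsin_t : 0 < sin t := sin_pos_of_pos_of_lt_pi ht.1 (by linarith [ht.2, pi_pos])
  have hcos_t : 0 ≤ cos t := cos_nonneg_of_mem_Icc ⟨by linarith [ht.1, pi_pos], ht.2⟩
  have hsin : 0 ≤ sin (y - t) := sin_nonneg_of_nonneg_of_le_pi (by linarith [hy.1, ht.2, pi_pos])
    (by linarith [hy.2, ht.1])
  have hcos : cos (y - t) ≤ 0 := cos_nonpos_of_pi_div_two_le_of_le (by linarith [hy.1, ht.2])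
    (by linarith [hy.2, ht.1, pi_pos])
  have hbracket : cos (y - t) * (1 + (κ - 2) * sin t ^ 2)
      - 2 * sin (y - t) * cos t * sin t ≤ 0 := by
    have : 0 ≤ 1 + (κ - 2) * sin t ^ 2 := by nlinarith [sq_nonneg (sin t)]
    nlinarith [mul_nonneg (mul_nonneg hsin hcos_t) hsin_t.le,
      mul_nonpos_of_nonpos_of_nonneg hcos this]
  have : sin t * profileDrift κ t y ≤ 0 := by
    rw [sin_mul_profileDrift hsin_t.ne']
    exact mul_nonpos_of_nonneg_of_nonpos hsin hbracket
  exact nonpos_of_mul_nonpos_right this hsin_t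

lemma SolvesProfileEquationAt.hasDerivAt_sin_mul_deriv_sub_one {κ : ℝ} {h : ℝ → ℝ} {t : ℝ}
    (hode : SolvesProfileEquationAt κ h t) (hs : sin t ≠ 0)
    (hd : DifferentiableAt ℝ (deriv h) t) :
    HasDerivAt (fun x ↦ sin x * (deriv h x - 1)) (profileDrift κ t (h t)) t := by
  refine ((hasDerivAt_sin t).mul (hd.hasDerivAt.sub_const 1)).congr_deriv ?_
  rw [SolvesProfileEquationAt] at hode
  have hd2 : deriv (deriv h) t = sin (2 * h t) / (2 * sin t ^ 2)
      + κ / 2 * sin (2 * h t - 2 * t) - cos t / sin t * deriv h t := by linarith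
  rw [hd2, profileDrift]
  field_simp
  ring

lemma deriv_eq_deriv_const_sub_of_add_eq {f : ℝ → ℝ} {a c θ : ℝ}
    (hf : ∀ᶠ x in 𝓝 θ, f x + f (a - x) = c) : deriv f θ = deriv f (a - θ) := by
  have : f =ᶠ[𝓝 θ] fun x ↦ c - f (a - x) := hf.mono fun x hx ↦ by simp [← hx]
  rw [this.deriv_eq, deriv_const_sub, deriv_comp_const_sub, neg_neg]

lemma deriv_le_of_forall_mem_Ioo {f : ℝ → ℝ} {a b c : ℝ} (hab : a < b)
    (hf : ContDiffOn ℝ 1 f (Icc a b)) (hc : 0 ≤ c) (hle : ∀ x ∈ Ioo a b, deriv f x ≤ c) :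
    ∀ x ∈ Icc a b, deriv f x ≤ c := by
  -- `0 ≤ c` is for endpoints where `f` has no two-sided derivative, since there `deriv f x = 0`.
  have hcont : ContinuousOn (derivWithin f (Icc a b)) (Icc a b) :=
    hf.continuousOn_derivWithin (uniqueDiffOn_Icc hab) le_rfl
  have hwithin (x : ℝ) (hx : x ∈ Icc a b) : derivWithin f (Icc a b) x ≤ c := by
    have hcl : closure (Ioo a b) = Icc a b := closure_Ioo hab.ne
    refine le_on_closure (f := derivWithin f (Icc a b)) (fun y hy ↦ ?_)
      (by rwa [hcl]) continuousOn_const (by rwa [hcl])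
    rw [derivWithin_of_mem_nhds (Icc_mem_nhds hy.1 hy.2)]
    exact hle y hy
  intro x hx
  by_cases hd : DifferentiableAt ℝ f x
  · rw [← hd.derivWithin (uniqueDiffOn_Icc hab x hx)]
    exact hwithin x hx
  · rw [deriv_zero_of_not_differentiableAt hd]
    exact hc

lemma deriv_le_one_of_wedge {κ : ℝ} (hκ : 2 ≤ κ) {h : ℝ → ℝ}
    (hC1 : ContDiffOn ℝ 1 h (Icc 0 π))
    (hC2 : ∀ θ ∈ Ioo 0 π, DifferentiableAt ℝ (deriv h) θ)
    (heq : ∀ θ ∈ Ioo 0 π, SolvesProfileEquationAt κ h θ)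
    (hwedge : ∀ θ ∈ Icc 0 (π / 2), π ≤ h θ ∧ h θ ≤ π + θ) :
    ∀ θ ∈ Ioc 0 (π / 2), deriv h θ ≤ 1 := by
  intro θ hθ
  have hhalf : Icc 0 (π / 2) ⊆ Icc 0 π := Icc_subset_Icc le_rfl (by linarith [pi_pos])
  set G : ℝ → ℝ := fun x ↦ sin x * (derivWithin h (Icc 0 π) x - 1)
  have hGcont : ContinuousOn G (Icc 0 (π / 2)) :=
    continuous_sin.continuousOn.mul
      (((hC1.continuousOn_derivWithin (uniqueDiffOn_Icc pi_pos) le_rfl).mono hhalf).sub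
        continuousOn_const)
  have hGderiv (x : ℝ) (hx : x ∈ Ioo 0 π) : HasDerivAt G (profileDrift κ x (h x)) x := by
    have hGeq : G =ᶠ[𝓝 x] fun y ↦ sin y * (deriv h y - 1) := by
      filter_upwards [Ioo_mem_nhds hx.1 hx.2] with y hy
      simp only [G, derivWithin_of_mem_nhds (Icc_mem_nhds hy.1 hy.2)]
    exact ((heq x hx).hasDerivAt_sin_mul_deriv_sub_one (sin_pos_of_pos_of_lt_pi hx.1 hx.2).ne'
      (hC2 x hx)).congr_of_eventuallyEq hGeq
  have hanti : AntitoneOn G (Icc 0 (π / 2)) := by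
    refine antitoneOn_of_hasDerivWithinAt_nonpos (convex_Icc _ _) hGcont
      (f' := fun x ↦ profileDrift κ x (h x)) (fun x hx ↦ ?_) (fun x hx ↦ ?_) <;>
      rw [interior_Icc] at hx
    · exact (hGderiv x ⟨hx.1, by linarith [hx.2, pi_pos]⟩).hasDerivWithinAt
    · exact profileDrift_nonpos hκ ⟨hx.1, hx.2.le⟩ (hwedge x ⟨hx.1.le, hx.2.le⟩)
  have hθπ : θ ∈ Ioo 0 π := ⟨hθ.1, by linarith [hθ.2, pi_pos]⟩
  have hGθ : sin θ * (deriv h θ - 1) ≤ 0 := by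
    simpa [G, derivWithin_of_mem_nhds (Icc_mem_nhds hθπ.1 hθπ.2)] using
      hanti (left_mem_Icc.2 (by positivity)) ⟨hθ.1.le, hθ.2⟩ hθ.1.le
  linarith [nonpos_of_mul_nonpos_right hGθ (sin_pos_of_pos_of_lt_pi hθπ.1 hθπ.2)]

theorem derivative_bound_first_type_general (κ : ℝ) (hκ : 4 ≤ κ) (h : ℝ → ℝ)
    (hC1 : ContDiffOn ℝ 1 h (Set.Icc 0 π))
    (hC2 : ∀ θ ∈ Set.Ioo (0 : ℝ) π, DifferentiableAt ℝ (deriv h) θ)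
    (heq : ∀ θ ∈ Set.Ioo (0 : ℝ) π,
      deriv (deriv h) θ + (Real.cos θ / Real.sin θ) * deriv h θ
        - Real.sin (2 * h θ) / (2 * Real.sin θ ^ 2)
        - (κ / 2) * Real.sin (2 * h θ - 2 * θ) = 0)
    (hsym : ∀ θ ∈ Set.Icc (0 : ℝ) π, h θ + h (π - θ) = 2 * π)
    (hwedge : ∀ θ ∈ Set.Icc (0 : ℝ) (π / 2), π ≤ h θ ∧ h θ ≤ π + θ) :
    ∀ θ ∈ Set.Icc (0 : ℝ) π, deriv h θ ≤ 1 := by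
  have hleft := deriv_le_one_of_wedge (by linarith) hC1 hC2 heq hwedge
  refine deriv_le_of_forall_mem_Ioo pi_pos hC1 zero_le_one fun θ hθ ↦ ?_
  rcases le_or_gt θ (π / 2) with hθ' | hθ'
  · exact hleft θ ⟨hθ.1, hθ'⟩
  · rw [deriv_eq_deriv_const_sub_of_add_eq (eventually_of_mem (Icc_mem_nhds hθ.1 hθ.2) hsym)]
    exact hleft (π - θ) ⟨by linarith [hθ.2], by linarith⟩

/-- A hemispheric critical profile of type (1,1) satisfying the first wedge
    condition has derivative at most 1 everywhere, when κ ≥ 4. -/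
theorem derivative_bound_first_type (κ : ℝ) (hκ : 4 ≤ κ) (h : ℝ → ℝ)
    (hC1 : ContDiffOn ℝ 1 h (Set.Icc 0 π))
    (hC2 : ∀ θ ∈ Set.Ioo (0 : ℝ) π, DifferentiableAt ℝ (deriv h) θ)
    (heq : ∀ θ ∈ Set.Ioo (0 : ℝ) π,
      deriv (deriv h) θ + (Real.cos θ / Real.sin θ) * deriv h θ
        - Real.sin (2 * h θ) / (2 * Real.sin θ ^ 2)
        - (κ / 2) * Real.sin (2 * h θ - 2 * θ) = 0)
    (h0 : h 0 = π) (hπ : h π = π)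
    (hsym : ∀ θ ∈ Set.Icc (0 : ℝ) π, h θ + h (π - θ) = 2 * π)
    (hwedge : ∀ θ ∈ Set.Icc (0 : ℝ) (π / 2), π ≤ h θ ∧ h θ ≤ π + θ) :
    ∀ θ ∈ Set.Icc (0 : ℝ) π, deriv h θ ≤ 1 :=
  derivative_bound_first_type_general κ hκ h hC1 hC2 heq hsym hwedge
end

section
/- There exists a constant C > 0 such that for all κ ≥ 4 the following holds. Set θ₀ = π/2 − π/(2√κ) and define h : [0, π] → ℝ by h(θ) = π + θ for θ ∈ [0, θ₀], h(θ) = π − (θ₀/(π/2 − θ₀))·(θ − π/2) for θ ∈ (θ₀, π − θ₀], and h(θ) = θ for θ ∈ (π − θ₀, π]. Then E(h) ≤ C·√κ, where E(h) = (1/2)·∫₀^π [h'(θ)²·sin θ + sin²(h(θ))/sin θ + κ·sin²(h(θ) − θ)·sin θ] dθ. -/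
open Real Set MeasureTheory Filter Topology

/-! Away from the transition layer `[θ₀, π - θ₀]` the profile is `θ + π` or `θ`, so the anisotropy
term vanishes and the density reduces to `2 sin θ ≤ 2`. On the layer, of width `π / √κ`, the slope
is `√κ - 1` and `sin θ ≥ 1/2`, so the density is at most `2κ + 2` and the layer contributes
`O(√κ)`. -/

lemma one_half_le_sin {x : ℝ} (h₁ : π / 6 ≤ x) (h₂ : x ≤ 5 * π / 6) : 1 / 2 ≤ sin x := by
  rw [← sin_pi_div_six]
  rcases le_total x (π / 2) with hx | hx
  · exact sin_le_sin_of_le_of_le_pi_div_two (by linarith [pi_pos]) hx h₁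
  · rw [← sin_pi_sub x]
    exact sin_le_sin_of_le_of_le_pi_div_two (by linarith [pi_pos]) (by linarith) (by linarith)

section IntervalBounds

variable {f : ℝ → ℝ} {a b c : ℝ}

lemma intervalIntegrable_of_forall_mem_Ioo (hab : a ≤ b) (hf : AEStronglyMeasurable f)
    (hfc : ∀ x ∈ Ioo a b, f x ∈ Icc 0 c) : IntervalIntegrable f volume a b := by
  rw [intervalIntegrable_iff_integrableOn_Ioo_of_le hab]
  refine Measure.integrableOn_of_bounded (M := c) measure_Ioo_lt_top.ne hf
    ((ae_restrict_iff' measurableSet_Ioo).2 (.of_forall fun x hx => ?_))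
  rw [norm_of_nonneg (hfc x hx).1]
  exact (hfc x hx).2

lemma integral_le_of_forall_mem_Ioo (hab : a ≤ b) (hf : AEStronglyMeasurable f)
    (hfc : ∀ x ∈ Ioo a b, f x ∈ Icc 0 c) : ∫ x in a..b, f x ≤ (b - a) * c := by
  calc ∫ x in a..b, f x ≤ ∫ _ in a..b, c :=
        intervalIntegral.integral_mono_on_of_le_Ioo hab
          (intervalIntegrable_of_forall_mem_Ioo hab hf hfc) intervalIntegrable_const
          fun x hx => (hfc x hx).2
    _ = (b - a) * c := by rw [intervalIntegral.integral_const, smul_eq_mul]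

end IntervalBounds

noncomputable def energyDensity (κ : ℝ) (h : ℝ → ℝ) (θ : ℝ) : ℝ :=
  deriv h θ ^ 2 * sin θ + sin (h θ) ^ 2 / sin θ + κ * sin (h θ - θ) ^ 2 * sin θ

section EnergyDensity

variable {κ θ : ℝ} {h : ℝ → ℝ}

lemma measurable_energyDensity (hh : Measurable h) : Measurable (energyDensity κ h) := by
  have := measurable_deriv h
  unfold energyDensity
  fun_prop

lemma energyDensity_nonneg (hκ : 0 ≤ κ) (hθ : 0 ≤ sin θ) : 0 ≤ energyDensity κ h θ := by
  unfold energyDensity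
  positivity

lemma energyDensity_eq_two_mul_sin (hd : deriv h θ = 1) (hh : sin (h θ - θ) = 0)
    (hθ : sin θ ≠ 0) : energyDensity κ h θ = 2 * sin θ := by
  have hsin : sin (h θ) ^ 2 = sin θ ^ 2 := by
    have hcos := sin_sq_add_cos_sq (h θ - θ)
    rw [← sub_add_cancel (h θ) θ, sin_add, hh]
    rw [hh] at hcos
    linear_combination sin θ ^ 2 * hcos
  unfold energyDensity
  rw [hd, hh, hsin]
  field_simp
  ring

lemma energyDensity_le (hκ : 0 ≤ κ) (hd : deriv h θ ^ 2 ≤ κ) (hθ : 1 / 2 ≤ sin θ) :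
    energyDensity κ h θ ≤ 2 * κ + 2 := by
  have hs1 := sin_le_one θ
  have hs0 : 0 < sin θ := by linarith
  have h₁ : deriv h θ ^ 2 * sin θ ≤ κ := (mul_le_of_le_one_right (sq_nonneg _) hs1).trans hd
  have h₂ : sin (h θ) ^ 2 / sin θ ≤ 2 := by
    rw [div_le_iff₀ hs0]
    nlinarith [sin_sq_le_one (h θ)]
  have h₃ : κ * sin (h θ - θ) ^ 2 * sin θ ≤ κ := by
    rw [mul_assoc]
    exact mul_le_of_le_one_right hκ (mul_le_one₀ (sin_sq_le_one _) hs0.le hs1)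
  unfold energyDensity
  linarith

end EnergyDensity

noncomputable def sawtooth (θ₀ θ : ℝ) : ℝ :=
  if θ ≤ θ₀ then π + θ
  else if θ ≤ π - θ₀ then π - (θ₀ / (π / 2 - θ₀)) * (θ - π / 2)
  else θ

section Sawtooth

variable {θ₀ θ : ℝ}

lemma measurable_sawtooth : Measurable (sawtooth θ₀) := by
  unfold sawtooth
  exact Measurable.ite measurableSet_Iic (by fun_prop)
    (Measurable.ite measurableSet_Iic (by fun_prop) measurable_id)

lemma sawtooth_of_le (hθ : θ ≤ θ₀) : sawtooth θ₀ θ = π + θ := by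
  simp [sawtooth, hθ]

lemma sawtooth_of_mem_Ioc (hθ : θ ∈ Ioc θ₀ (π - θ₀)) :
    sawtooth θ₀ θ = π - (θ₀ / (π / 2 - θ₀)) * (θ - π / 2) := by
  simp [sawtooth, hθ.2, not_le.2 hθ.1]

lemma sawtooth_of_gt (hθ₀ : θ₀ ≤ π - θ₀) (hθ : π - θ₀ < θ) : sawtooth θ₀ θ = θ := by
  simp [sawtooth, not_le.2 hθ, not_le.2 (hθ₀.trans_lt hθ)]

lemma deriv_sawtooth_of_lt (hθ : θ < θ₀) : deriv (sawtooth θ₀) θ = 1 := by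
  have : sawtooth θ₀ =ᶠ[𝓝 θ] fun x => π + x :=
    (eventually_lt_nhds hθ).mono fun x hx => sawtooth_of_le hx.le
  rw [this.deriv_eq]
  simp

lemma deriv_sawtooth_of_mem_Ioo (hθ : θ ∈ Ioo θ₀ (π - θ₀)) :
    deriv (sawtooth θ₀) θ = -(θ₀ / (π / 2 - θ₀)) := by
  have : sawtooth θ₀ =ᶠ[𝓝 θ] fun x => π - (θ₀ / (π / 2 - θ₀)) * (x - π / 2) :=
    eventually_of_mem (Ioo_mem_nhds hθ.1 hθ.2) fun _ hx =>
      sawtooth_of_mem_Ioc (Ioo_subset_Ioc_self hx)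
  rw [this.deriv_eq]
  simp

lemma deriv_sawtooth_of_gt (hθ₀ : θ₀ ≤ π - θ₀) (hθ : π - θ₀ < θ) : deriv (sawtooth θ₀) θ = 1 := by
  have : sawtooth θ₀ =ᶠ[𝓝 θ] fun x => x :=
    (eventually_gt_nhds hθ).mono fun x hx => sawtooth_of_gt hθ₀ hx
  rw [this.deriv_eq]
  simp

end Sawtooth

lemma integral_energyDensity_sawtooth_le {κ θ₀ : ℝ} (hκ : 0 ≤ κ) (hθ₀ : π / 6 ≤ θ₀)
    (hθ₀' : θ₀ ≤ π / 2) (hslope : (θ₀ / (π / 2 - θ₀)) ^ 2 ≤ κ) :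
    ∫ θ in 0..π, energyDensity κ (sawtooth θ₀) θ ≤ 4 * θ₀ + (π - 2 * θ₀) * (2 * κ + 2) := by
  set F := energyDensity κ (sawtooth θ₀)
  have hF : AEStronglyMeasurable F :=
    (measurable_energyDensity measurable_sawtooth).aestronglyMeasurable
  have hπ := pi_pos
  have hmid : θ₀ ≤ π - θ₀ := by linarith
  have outer : ∀ θ, 0 < sin θ → deriv (sawtooth θ₀) θ = 1 → sin (sawtooth θ₀ θ - θ) = 0 →
      F θ ∈ Icc 0 2 := fun θ hs hd hh => by
    show energyDensity κ _ θ ∈ Icc 0 2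
    rw [Set.mem_Icc, energyDensity_eq_two_mul_sin hd hh hs.ne']
    constructor <;> linarith [sin_le_one θ]
  have left : ∀ θ ∈ Ioo 0 θ₀, F θ ∈ Icc 0 2 := fun θ hθ =>
    outer θ (sin_pos_of_pos_of_lt_pi hθ.1 (by linarith [hθ.2])) (deriv_sawtooth_of_lt hθ.2)
      (by rw [sawtooth_of_le hθ.2.le, add_sub_cancel_right, sin_pi])
  have right : ∀ θ ∈ Ioo (π - θ₀) π, F θ ∈ Icc 0 2 := fun θ hθ =>
    outer θ (sin_pos_of_pos_of_lt_pi (by linarith [hθ.1]) hθ.2)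
      (deriv_sawtooth_of_gt hmid hθ.1) (by rw [sawtooth_of_gt hmid hθ.1, sub_self, sin_zero])
  have middle : ∀ θ ∈ Ioo θ₀ (π - θ₀), F θ ∈ Icc 0 (2 * κ + 2) := fun θ hθ => by
    have hs : 1 / 2 ≤ sin θ := one_half_le_sin (by linarith [hθ.1]) (by linarith [hθ.2])
    refine ⟨energyDensity_nonneg hκ (by linarith), energyDensity_le hκ ?_ hs⟩
    rwa [deriv_sawtooth_of_mem_Ioo hθ, neg_sq]
  have hi₁ := intervalIntegrable_of_forall_mem_Ioo (by linarith) hF left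
  have hi₂ := intervalIntegrable_of_forall_mem_Ioo hmid hF middle
  have hi₃ := intervalIntegrable_of_forall_mem_Ioo (by linarith) hF right
  rw [← intervalIntegral.integral_add_adjacent_intervals hi₁ (hi₂.trans hi₃),
    ← intervalIntegral.integral_add_adjacent_intervals hi₂ hi₃]
  have b₁ := integral_le_of_forall_mem_Ioo (by linarith) hF left
  have b₂ := integral_le_of_forall_mem_Ioo hmid hF middle
  have b₃ := integral_le_of_forall_mem_Ioo (by linarith) hF right
  linarith

/-- Energy bound for the sawtooth initial profile: there is a universal constant
    C > 0 such that for all κ ≥ 4 the piecewise-linear profile h (with break at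
    θ₀ = π/2 − π/(2√κ)) satisfies E(h) ≤ C√κ. -/
theorem energy_bound_initial_profile :
    ∃ C : ℝ, 0 < C ∧ ∀ κ : ℝ, 4 ≤ κ →
      ∀ θ₀ : ℝ, θ₀ = π / 2 - π / (2 * Real.sqrt κ) →
      ∀ h : ℝ → ℝ,
        (h = fun θ =>
          if θ ≤ θ₀ then π + θ
          else if θ ≤ π - θ₀ then π - (θ₀ / (π / 2 - θ₀)) * (θ - π / 2)
          else θ) →
        (1 / 2) * (∫ θ in (0 : ℝ)..π,
            (deriv h θ) ^ 2 * Real.sin θ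
            + Real.sin (h θ) ^ 2 / Real.sin θ
            + κ * Real.sin (h θ - θ) ^ 2 * Real.sin θ)
          ≤ C * Real.sqrt κ := by
  refine ⟨2 * π, by positivity, fun κ hκ θ₀ hθ₀ h hh => ?_⟩
  subst hh
  set s := √κ
  have hκs : κ = s ^ 2 := (sq_sqrt (by linarith)).symm
  have hs2 : 2 ≤ s := by rw [le_sqrt' two_pos]; linarith
  have hπ := pi_pos
  have hθ₀π : θ₀ ≤ π / 2 := by rw [hθ₀]; linarith [show 0 ≤ π / (2 * s) by positivity]
  have hπs : π / s ≤ π / 2 := div_le_div_of_nonneg_left hπ.le zero_lt_two hs2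
  have hgap : π - 2 * θ₀ = π / s := by rw [hθ₀]; field_simp; ring
  have hslope : θ₀ / (π / 2 - θ₀) = s - 1 := by
    rw [hθ₀]; field_simp; ring
  have hbound := integral_energyDensity_sawtooth_le (κ := κ) (θ₀ := θ₀) (by linarith)
    (by linarith) (by linarith) (by rw [hslope, hκs]; nlinarith)
  have hlayer : (π - 2 * θ₀) * (2 * κ + 2) ≤ 2 * π * s + π := by
    rw [hgap, hκs]
    have : π / s * (2 * s ^ 2 + 2) = 2 * π * s + 2 * (π / s) := by field_simp
    linarith
  show 1 / 2 * ∫ θ in 0..π, energyDensity κ (sawtooth θ₀) θ ≤ 2 * π * s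
  nlinarith [mul_le_mul_of_nonneg_left hs2 hπ.le]
end

section
/- Let κ > 0 and let h : [0, π] → ℝ be smooth, solving the profile equation h''(θ) + (cos θ / sin θ)·h'(θ) − sin(2h(θ))/(2 sin²θ) − (κ/2)·sin(2h(θ) − 2θ) = 0 on (0, π), with h(0) and h(π) integer multiples of π and h(θ) + h(π − θ) = h(0) + h(π) for all θ ∈ [0, π]. Define g(θ) = (h'(θ) − 1)·sin θ. Then the second variation δ²E[h](g) = ∫₀^π [g'(θ)²·sin θ + (cos(2h(θ))/sin²θ + κ·cos(2h(θ) − 2θ))·g(θ)²·sin θ] dθ satisfies δ²E[h](g) = 2·∫₀^{π/2} [cos(2θ) − cos(2h(θ)) − κ·sin(2h(θ) − 2θ)·sin θ·cos θ]·g(θ) dθ. -/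
open Real Set MeasureTheory intervalIntegral

lemma key_alg (κ θ a p q r : ℝ) (hs : Real.sin θ ≠ 0)
    (hq : q = -((cos θ / sin θ) * p) + sin (2*a) / (2 * sin θ ^ 2) + (κ/2) * sin (2*a - 2*θ))
    (hr : r = -( (((-sin θ) * sin θ - cos θ * cos θ) / sin θ ^ 2 * p + (cos θ / sin θ) * q)
        - ((cos (2*a) * (2*p)) * (2 * sin θ ^ 2) - sin (2*a) * (2 * (2 * sin θ * cos θ))) / (2 * sin θ ^ 2) ^ 2
        - κ/2 * (cos (2*a - 2*θ) * (2*p - 2)) )) :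
    (q * sin θ + (p-1) * cos θ)^2 * sin θ
      + ((r * sin θ + 2*q*cos θ - (p-1) * sin θ) * sin θ + (q * sin θ + (p-1)*cos θ) * cos θ) * ((p-1) * sin θ)
    = ((q * sin θ + (p-1) * cos θ)^2 * sin θ
        + (cos (2*a) / sin θ ^ 2 + κ * cos (2*a - 2*θ)) * ((p-1) * sin θ)^2 * sin θ)
      - (cos (2*θ) - cos (2*a) - κ * sin (2*a - 2*θ) * sin θ * cos θ) * ((p-1) * sin θ) := by
  have h1 : sin θ ^ 2 + cos θ ^ 2 = 1 := sin_sq_add_cos_sq θ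
  have h2 : sin a ^ 2 + cos a ^ 2 = 1 := sin_sq_add_cos_sq a
  subst hr hq
  simp only [Real.sin_sub, Real.cos_sub, Real.sin_two_mul, Real.cos_two_mul]
  field_simp
  linear_combination (Real.sin θ ^ 2 * (p - 1)) * h1

lemma cos_int_two_pi_sub' (k : ℤ) (x : ℝ) : Real.cos ((k:ℝ)*(2*Real.pi) - x) = Real.cos x := by
  have hs : Real.sin ((k:ℝ)*(2*Real.pi)) = 0 := by
    rw [show (k:ℝ)*(2*Real.pi) = ((2*k : ℤ):ℝ)*Real.pi by push_cast; ring, Real.sin_int_mul_pi]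
  rw [Real.cos_sub, hs, Real.cos_int_mul_two_pi]; ring

lemma sin_int_two_pi_sub' (k : ℤ) (x : ℝ) : Real.sin ((k:ℝ)*(2*Real.pi) - x) = - Real.sin x := by
  have hs : Real.sin ((k:ℝ)*(2*Real.pi)) = 0 := by
    rw [show (k:ℝ)*(2*Real.pi) = ((2*k : ℤ):ℝ)*Real.pi by push_cast; ring, Real.sin_int_mul_pi]
  rw [Real.sin_sub, hs, Real.cos_int_mul_two_pi]; ring

/-- Rewriting of the second variation at a hemispheric critical profile in the
    direction g = (h' − 1)·sin:
    δ²E[h](g) = 2 ∫₀^{π/2} (cos 2θ − cos 2h − κ sin(2h−2θ) sin θ cos θ) g dθ. -/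
theorem second_variation_identity (κ : ℝ) (hκ : 0 < κ) (h : ℝ → ℝ)
    (hsmooth : ContDiffOn ℝ (⊤ : ℕ∞) h (Set.Icc 0 π))
    (heq : ∀ θ ∈ Set.Ioo (0 : ℝ) π,
      deriv (deriv h) θ + (Real.cos θ / Real.sin θ) * deriv h θ
        - Real.sin (2 * h θ) / (2 * Real.sin θ ^ 2)
        - (κ / 2) * Real.sin (2 * h θ - 2 * θ) = 0)
    (hbd : ∃ m n : ℤ, h 0 = (m : ℝ) * π ∧ h π = (n : ℝ) * π)
    (hsym : ∀ θ ∈ Set.Icc (0 : ℝ) π, h θ + h (π - θ) = h 0 + h π)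
    (g : ℝ → ℝ) (hg : g = fun θ => (deriv h θ - 1) * Real.sin θ) :
    (∫ θ in (0 : ℝ)..π,
        (deriv g θ) ^ 2 * Real.sin θ
        + (Real.cos (2 * h θ) / Real.sin θ ^ 2
            + κ * Real.cos (2 * h θ - 2 * θ)) * (g θ) ^ 2 * Real.sin θ)
      = 2 * ∫ θ in (0 : ℝ)..(π / 2),
          (Real.cos (2 * θ) - Real.cos (2 * h θ)
            - κ * Real.sin (2 * h θ - 2 * θ) * Real.sin θ * Real.cos θ) * g θ := by
  have pip : (0:ℝ) < π := pi_pos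
  -- interior points are in the interior of Icc
  have hIccmem : ∀ θ ∈ Ioo (0:ℝ) π, Icc (0:ℝ) π ∈ nhds θ :=
    fun θ hθ => Icc_mem_nhds hθ.1 hθ.2
  -- smoothness of derivatives on the open interval
  have hsO : ContDiffOn ℝ (⊤ : ℕ∞) h (Ioo 0 π) := hsmooth.mono Ioo_subset_Icc_self
  have hs1 : ContDiffOn ℝ (⊤ : ℕ∞) (deriv h) (Ioo 0 π) := hsO.deriv_of_isOpen isOpen_Ioo (by simp)
  have hs2 : ContDiffOn ℝ (⊤ : ℕ∞) (deriv (deriv h)) (Ioo 0 π) := hs1.deriv_of_isOpen isOpen_Ioo (by simp)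
  have hd1 : ∀ θ ∈ Ioo (0:ℝ) π, HasDerivAt h (deriv h θ) θ := by
    intro θ hθ
    exact (((hsO.contDiffAt (isOpen_Ioo.mem_nhds hθ)).differentiableAt (by simp)).hasDerivAt)
  have hd2 : ∀ θ ∈ Ioo (0:ℝ) π, HasDerivAt (deriv h) (deriv (deriv h) θ) θ := by
    intro θ hθ
    exact (((hs1.contDiffAt (isOpen_Ioo.mem_nhds hθ)).differentiableAt (by simp)).hasDerivAt)
  have hd3 : ∀ θ ∈ Ioo (0:ℝ) π, HasDerivAt (deriv (deriv h)) (deriv (deriv (deriv h)) θ) θ := by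
    intro θ hθ
    exact (((hs2.contDiffAt (isOpen_Ioo.mem_nhds hθ)).differentiableAt (by simp)).hasDerivAt)
  have hsinne : ∀ θ ∈ Ioo (0:ℝ) π, Real.sin θ ≠ 0 :=
    fun θ hθ => ne_of_gt (Real.sin_pos_of_pos_of_lt_pi hθ.1 hθ.2)
  -- continuous versions of first and second derivatives on [0, π]
  set H1 : ℝ → ℝ := derivWithin h (Icc 0 π) with hH1def
  set H2 : ℝ → ℝ := derivWithin H1 (Icc 0 π) with hH2def
  have hUD : UniqueDiffOn ℝ (Icc (0:ℝ) π) := uniqueDiffOn_Icc pip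
  have hH1smooth : ContDiffOn ℝ (⊤ : ℕ∞) H1 (Icc 0 π) := hsmooth.derivWithin hUD (by simp)
  have hH1cont : ContinuousOn H1 (Icc 0 π) := hH1smooth.continuousOn
  have hH2smooth : ContDiffOn ℝ (⊤ : ℕ∞) H2 (Icc 0 π) := hH1smooth.derivWithin hUD (by simp)
  have hH2cont : ContinuousOn H2 (Icc 0 π) := hH2smooth.continuousOn
  have hH1eq : ∀ θ ∈ Ioo (0:ℝ) π, H1 θ = deriv h θ :=
    fun θ hθ => derivWithin_of_mem_nhds (hIccmem θ hθ)
  have hH2eq : ∀ θ ∈ Ioo (0:ℝ) π, H2 θ = deriv (deriv h) θ := by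
    intro θ hθ
    rw [hH2def, derivWithin_of_mem_nhds (hIccmem θ hθ)]
    have : H1 =ᶠ[nhds θ] deriv h :=
      Filter.eventually_of_mem (isOpen_Ioo.mem_nhds hθ) (fun t ht => hH1eq t ht)
    exact this.deriv_eq
  -- solved form of the ODE
  have hq' : ∀ θ ∈ Ioo (0:ℝ) π, deriv (deriv h) θ =
      -((Real.cos θ / Real.sin θ) * deriv h θ) + Real.sin (2 * h θ) / (2 * Real.sin θ ^ 2)
        + (κ/2) * Real.sin (2 * h θ - 2 * θ) := by
    intro θ hθ
    have := heq θ hθ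
    linarith
  -- derivative of the ODE
  have hr' : ∀ θ ∈ Ioo (0:ℝ) π, deriv (deriv (deriv h)) θ =
      -( (((-Real.sin θ) * Real.sin θ - Real.cos θ * Real.cos θ) / Real.sin θ ^ 2 * deriv h θ
            + (Real.cos θ / Real.sin θ) * deriv (deriv h) θ)
        - ((Real.cos (2 * h θ) * (2 * deriv h θ)) * (2 * Real.sin θ ^ 2)
            - Real.sin (2 * h θ) * (2 * (2 * Real.sin θ * Real.cos θ))) / (2 * Real.sin θ ^ 2) ^ 2
        - κ/2 * (Real.cos (2 * h θ - 2 * θ) * (2 * deriv h θ - 2)) ) := by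
    intro θ hθ
    have hs := hsinne θ hθ
    have hsθ : HasDerivAt Real.sin (Real.cos θ) θ := Real.hasDerivAt_sin θ
    have hcθ : HasDerivAt Real.cos (-Real.sin θ) θ := Real.hasDerivAt_cos θ
    -- derivative of cot * h'
    have ht1 : HasDerivAt (fun t => (Real.cos t / Real.sin t) * deriv h t)
        (((-Real.sin θ) * Real.sin θ - Real.cos θ * Real.cos θ) / Real.sin θ ^ 2 * deriv h θ
          + (Real.cos θ / Real.sin θ) * deriv (deriv h) θ) θ :=
      (hcθ.div hsθ hs).mul (hd2 θ hθ)
    -- derivative of sin(2h)/(2 sin^2)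
    have hnum : HasDerivAt (fun t => Real.sin (2 * h t)) (Real.cos (2 * h θ) * (2 * deriv h θ)) θ :=
      ((hd1 θ hθ).const_mul 2).sin
    have hden : HasDerivAt (fun t => 2 * Real.sin t ^ 2) (2 * (2 * Real.sin θ * Real.cos θ)) θ := by
      have this : HasDerivAt (fun t => 2 * Real.sin t ^ 2) (2 * ((2:ℕ) * Real.sin θ ^ (2 - 1) * Real.cos θ)) θ := (hsθ.pow 2).const_mul (2:ℝ)
      convert this using 1
      push_cast
      ring
    have hden0 : (2 * Real.sin θ ^ 2) ≠ 0 := by positivity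
    have ht2 : HasDerivAt (fun t => Real.sin (2 * h t) / (2 * Real.sin t ^ 2))
        (((Real.cos (2 * h θ) * (2 * deriv h θ)) * (2 * Real.sin θ ^ 2)
          - Real.sin (2 * h θ) * (2 * (2 * Real.sin θ * Real.cos θ))) / (2 * Real.sin θ ^ 2) ^ 2) θ :=
      hnum.div hden hden0
    -- derivative of (κ/2) sin(2h - 2t)
    have hinner : HasDerivAt (fun t => 2 * h t - 2 * t) (2 * deriv h θ - 2) θ := by
      have h2 : HasDerivAt (fun t : ℝ => 2 * t) 2 θ := by
        simpa using (hasDerivAt_id θ).const_mul (2:ℝ)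
      exact ((hd1 θ hθ).const_mul 2).sub h2
    have ht3 : HasDerivAt (fun t => κ/2 * Real.sin (2 * h t - 2 * t))
        (κ/2 * (Real.cos (2 * h θ - 2 * θ) * (2 * deriv h θ - 2))) θ :=
      (((Real.hasDerivAt_sin (2 * h θ - 2 * θ)).comp θ hinner)).const_mul (κ/2)
    -- the second derivative agrees with the RHS of the ODE near θ
    have hΘ : HasDerivAt (fun t => -((Real.cos t / Real.sin t) * deriv h t)
          + Real.sin (2 * h t) / (2 * Real.sin t ^ 2) + κ/2 * Real.sin (2 * h t - 2 * t))
        (-(((-Real.sin θ) * Real.sin θ - Real.cos θ * Real.cos θ) / Real.sin θ ^ 2 * deriv h θ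
            + (Real.cos θ / Real.sin θ) * deriv (deriv h) θ)
          + ((Real.cos (2 * h θ) * (2 * deriv h θ)) * (2 * Real.sin θ ^ 2)
              - Real.sin (2 * h θ) * (2 * (2 * Real.sin θ * Real.cos θ))) / (2 * Real.sin θ ^ 2) ^ 2
          + κ/2 * (Real.cos (2 * h θ - 2 * θ) * (2 * deriv h θ - 2))) θ :=
      (ht1.neg.add ht2).add ht3
    have heq' : (deriv (deriv h)) =ᶠ[nhds θ] (fun t => -((Real.cos t / Real.sin t) * deriv h t)
          + Real.sin (2 * h t) / (2 * Real.sin t ^ 2) + κ/2 * Real.sin (2 * h t - 2 * t)) :=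
      Filter.eventually_of_mem (isOpen_Ioo.mem_nhds hθ) (fun t ht => hq' t ht)
    have := (hΘ.congr_of_eventuallyEq heq').unique (hd3 θ hθ)
    rw [← this]
    ring
  -- facts about g
  have hgd : ∀ θ ∈ Ioo (0:ℝ) π, HasDerivAt g
      (deriv (deriv h) θ * Real.sin θ + (deriv h θ - 1) * Real.cos θ) θ := by
    intro θ hθ
    rw [hg]
    exact ((hd2 θ hθ).sub_const 1).mul (Real.hasDerivAt_sin θ)
  have hgdval : ∀ θ ∈ Ioo (0:ℝ) π, deriv g θ
      = deriv (deriv h) θ * Real.sin θ + (deriv h θ - 1) * Real.cos θ :=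
    fun θ hθ => (hgd θ hθ).deriv
  have hgd2 : ∀ θ ∈ Ioo (0:ℝ) π, HasDerivAt (deriv g)
      ((deriv (deriv (deriv h)) θ * Real.sin θ + deriv (deriv h) θ * Real.cos θ)
        + (deriv (deriv h) θ * Real.cos θ + (deriv h θ - 1) * (-Real.sin θ))) θ := by
    intro θ hθ
    have hG1 : HasDerivAt (fun t => deriv (deriv h) t * Real.sin t + (deriv h t - 1) * Real.cos t)
        ((deriv (deriv (deriv h)) θ * Real.sin θ + deriv (deriv h) θ * Real.cos θ)
          + (deriv (deriv h) θ * Real.cos θ + (deriv h θ - 1) * (-Real.sin θ))) θ :=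
      ((hd3 θ hθ).mul (Real.hasDerivAt_sin θ)).add (((hd2 θ hθ).sub_const 1).mul (Real.hasDerivAt_cos θ))
    apply hG1.congr_of_eventuallyEq
    exact Filter.eventually_of_mem (isOpen_Ioo.mem_nhds hθ) (fun t ht => hgdval t ht)
  -- Claim A: derivative identity for φ = g · g' · sin
  have hφd : ∀ θ ∈ Ioo (0:ℝ) π, HasDerivAt (fun t => g t * deriv g t * Real.sin t)
      (((deriv g θ) ^ 2 * Real.sin θ
          + (Real.cos (2 * h θ) / Real.sin θ ^ 2 + κ * Real.cos (2 * h θ - 2 * θ)) * (g θ) ^ 2 * Real.sin θ)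
        - (Real.cos (2 * θ) - Real.cos (2 * h θ)
            - κ * Real.sin (2 * h θ - 2 * θ) * Real.sin θ * Real.cos θ) * g θ) θ := by
    intro θ hθ
    have hs := hsinne θ hθ
    have raw : HasDerivAt (fun t => g t * deriv g t * Real.sin t)
        ((((deriv (deriv h) θ * Real.sin θ + (deriv h θ - 1) * Real.cos θ) * deriv g θ
            + g θ * (((deriv (deriv (deriv h)) θ * Real.sin θ + deriv (deriv h) θ * Real.cos θ)
              + (deriv (deriv h) θ * Real.cos θ + (deriv h θ - 1) * (-Real.sin θ))))) * Real.sin θ)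
          + (g θ * deriv g θ) * Real.cos θ) θ :=
      ((hgd θ hθ).mul (hgd2 θ hθ)).mul (Real.hasDerivAt_sin θ)
    have k := key_alg κ θ (h θ) (deriv h θ) (deriv (deriv h) θ) (deriv (deriv (deriv h)) θ)
      hs (hq' θ hθ) (hr' θ hθ)
    convert raw using 1
    rw [hgdval θ hθ]
    simp only [hg]
    linear_combination -k
  -- endpoint dichotomy
  have hcase : ∀ t ∈ Icc (0:ℝ) π, t ∈ Ioo (0:ℝ) π ∨ Real.sin t = 0 := by
    intro t ht
    rcases eq_or_lt_of_le ht.1 with h0 | h0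
    · right; rw [← h0]; exact Real.sin_zero
    rcases eq_or_lt_of_le ht.2 with h1 | h1
    · right; rw [h1]; exact Real.sin_pi
    · left; exact ⟨h0, h1⟩
  have hcont : ContinuousOn h (Icc 0 π) := hsmooth.continuousOn
  -- continuity of φ = g g' sin on [0,π]
  have hφcont : ContinuousOn (fun t => g t * deriv g t * Real.sin t) (Icc 0 π) := by
    have hc : ContinuousOn (fun t => ((H1 t - 1) * Real.sin t)
        * (H2 t * Real.sin t + (H1 t - 1) * Real.cos t) * Real.sin t) (Icc 0 π) := by
      exact (((hH1cont.sub continuousOn_const).mul Real.continuous_sin.continuousOn).mul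
        ((hH2cont.mul Real.continuous_sin.continuousOn).add
          ((hH1cont.sub continuousOn_const).mul Real.continuous_cos.continuousOn))).mul
        Real.continuous_sin.continuousOn
    apply hc.congr
    intro t ht
    beta_reduce
    rcases hcase t ht with hI | hz
    · rw [hgdval t hI]
      simp only [hg, hH1eq t hI, hH2eq t hI]
    · simp [hg, hz]
  -- g agrees with its continuous version on [0,π]
  have hGg : ∀ t ∈ Icc (0:ℝ) π, g t = (H1 t - 1) * Real.sin t := by
    intro t ht
    rcases hcase t ht with hI | hz
    · simp only [hg, hH1eq t hI]
    · simp [hg, hz]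
  -- continuity of the f-integrand
  have hficont : ContinuousOn (fun θ => Real.cos (2*θ) - Real.cos (2*h θ)
      - κ * Real.sin (2*h θ - 2*θ) * Real.sin θ * Real.cos θ) (Icc 0 π) := by
    apply ContinuousOn.sub
    apply ContinuousOn.sub
    · exact (Real.continuous_cos.comp (continuous_const.mul continuous_id)).continuousOn
    · exact Real.continuous_cos.comp_continuousOn (continuousOn_const.mul hcont)
    · exact ((continuousOn_const.mul (Real.continuous_sin.comp_continuousOn
        ((continuousOn_const.mul hcont).sub (continuous_const.mul continuous_id).continuousOn))).mul
        Real.continuous_sin.continuousOn).mul Real.continuous_cos.continuousOn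
  -- the full integrand minus f·g agrees on (0,π) with a continuous function Fc
  have hFceq : ∀ t ∈ Ioo (0:ℝ) π,
      ((deriv g t) ^ 2 * Real.sin t + (Real.cos (2 * h t) / Real.sin t ^ 2
          + κ * Real.cos (2 * h t - 2 * t)) * (g t) ^ 2 * Real.sin t)
        - (Real.cos (2 * t) - Real.cos (2 * h t)
            - κ * Real.sin (2 * h t - 2 * t) * Real.sin t * Real.cos t) * g t
      = (H2 t * Real.sin t + (H1 t - 1) * Real.cos t)^2 * Real.sin t
          + (Real.cos (2*h t) + κ * Real.cos (2*h t - 2*t) * Real.sin t ^ 2) * (H1 t - 1)^2 * Real.sin t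
          - (Real.cos (2*t) - Real.cos (2*h t)
              - κ * Real.sin (2*h t - 2*t) * Real.sin t * Real.cos t) * ((H1 t - 1) * Real.sin t) := by
    intro t hI
    have hs := hsinne t hI
    rw [hgdval t hI]
    simp only [hg, hH1eq t hI, hH2eq t hI]
    field_simp
  have hFccont : ContinuousOn (fun t => (H2 t * Real.sin t + (H1 t - 1) * Real.cos t)^2 * Real.sin t
      + (Real.cos (2*h t) + κ * Real.cos (2*h t - 2*t) * Real.sin t ^ 2) * (H1 t - 1)^2 * Real.sin t
      - (Real.cos (2*t) - Real.cos (2*h t)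
          - κ * Real.sin (2*h t - 2*t) * Real.sin t * Real.cos t) * ((H1 t - 1) * Real.sin t)) (Icc 0 π) := by
    apply ContinuousOn.sub
    apply ContinuousOn.add
    · exact ((((hH2cont.mul Real.continuous_sin.continuousOn).add
        ((hH1cont.sub continuousOn_const).mul Real.continuous_cos.continuousOn)).pow 2)).mul
        Real.continuous_sin.continuousOn
    · exact (((Real.continuous_cos.comp_continuousOn (continuousOn_const.mul hcont)).add
        ((continuousOn_const.mul (Real.continuous_cos.comp_continuousOn
          ((continuousOn_const.mul hcont).sub (continuous_const.mul continuous_id).continuousOn))).mul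
          (Real.continuous_sin.continuousOn.pow 2))).mul
        ((hH1cont.sub continuousOn_const).pow 2)).mul Real.continuous_sin.continuousOn
    · exact hficont.mul ((hH1cont.sub continuousOn_const).mul Real.continuous_sin.continuousOn)
  have hFcint : IntervalIntegrable (fun t => (H2 t * Real.sin t + (H1 t - 1) * Real.cos t)^2 * Real.sin t
      + (Real.cos (2*h t) + κ * Real.cos (2*h t - 2*t) * Real.sin t ^ 2) * (H1 t - 1)^2 * Real.sin t
      - (Real.cos (2*t) - Real.cos (2*h t)
          - κ * Real.sin (2*h t - 2*t) * Real.sin t * Real.cos t) * ((H1 t - 1) * Real.sin t)) volume 0 π :=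
    ContinuousOn.intervalIntegrable (by rw [uIcc_of_le pip.le]; exact hFccont)
  have hIoo : IntervalIntegrable (fun θ =>
      ((deriv g θ) ^ 2 * Real.sin θ + (Real.cos (2 * h θ) / Real.sin θ ^ 2
          + κ * Real.cos (2 * h θ - 2 * θ)) * (g θ) ^ 2 * Real.sin θ)
        - (Real.cos (2 * θ) - Real.cos (2 * h θ)
            - κ * Real.sin (2 * h θ - 2 * θ) * Real.sin θ * Real.cos θ) * g θ) volume 0 π := by
    rw [intervalIntegrable_iff_integrableOn_Ioo_of_le pip.le] at hFcint ⊢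
    exact hFcint.congr_fun (fun t ht => (hFceq t ht).symm) measurableSet_Ioo
  have hfgcont : ContinuousOn (fun θ => (Real.cos (2*θ) - Real.cos (2*h θ)
      - κ * Real.sin (2*h θ - 2*θ) * Real.sin θ * Real.cos θ) * g θ) (Icc 0 π) := by
    apply (hficont.mul ((hH1cont.sub (continuousOn_const (c := (1:ℝ)))).mul Real.continuous_sin.continuousOn)).congr
    intro t ht
    beta_reduce
    rw [hGg t ht]
    rfl
  have hfgint : IntervalIntegrable (fun θ => (Real.cos (2*θ) - Real.cos (2*h θ)
      - κ * Real.sin (2*h θ - 2*θ) * Real.sin θ * Real.cos θ) * g θ) volume 0 π :=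
    ContinuousOn.intervalIntegrable (by rw [uIcc_of_le pip.le]; exact hfgcont)
  have hFint : IntervalIntegrable (fun θ => (deriv g θ) ^ 2 * Real.sin θ
      + (Real.cos (2 * h θ) / Real.sin θ ^ 2
          + κ * Real.cos (2 * h θ - 2 * θ)) * (g θ) ^ 2 * Real.sin θ) volume 0 π := by
    have := hIoo.add hfgint
    simpa using this
  -- FTC: the boundary term vanishes
  have hFTC := intervalIntegral.integral_eq_sub_of_hasDeriv_right_of_le pip.le hφcont
    (fun x hx => (hφd x hx).hasDerivWithinAt) hIoo
  have hFTC0 : (∫ θ in (0:ℝ)..π,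
      (((deriv g θ) ^ 2 * Real.sin θ + (Real.cos (2 * h θ) / Real.sin θ ^ 2
          + κ * Real.cos (2 * h θ - 2 * θ)) * (g θ) ^ 2 * Real.sin θ)
        - (Real.cos (2 * θ) - Real.cos (2 * h θ)
            - κ * Real.sin (2 * h θ - 2 * θ) * Real.sin θ * Real.cos θ) * g θ)) = 0 := by
    rw [hFTC]
    simp [hg, Real.sin_pi]
  have hsub := intervalIntegral.integral_sub hFint hfgint
  have hsplit : (∫ θ in (0:ℝ)..π, ((deriv g θ) ^ 2 * Real.sin θ
      + (Real.cos (2 * h θ) / Real.sin θ ^ 2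
          + κ * Real.cos (2 * h θ - 2 * θ)) * (g θ) ^ 2 * Real.sin θ))
      = ∫ θ in (0:ℝ)..π, (Real.cos (2*θ) - Real.cos (2*h θ)
          - κ * Real.sin (2*h θ - 2*θ) * Real.sin θ * Real.cos θ) * g θ := by
    rw [hFTC0] at hsub
    linarith
  -- symmetry of h' about π/2
  obtain ⟨m, n, hm, hn⟩ := hbd
  have hsymd : ∀ θ ∈ Ioo (0:ℝ) π, deriv h (π - θ) = deriv h θ := by
    intro θ hθ
    have hθ' : π - θ ∈ Ioo (0:ℝ) π := ⟨by linarith [hθ.2], by linarith [hθ.1]⟩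
    have hlin : HasDerivAt (fun t : ℝ => π - t) (-1) θ := by
      simpa using (hasDerivAt_id θ).const_sub π
    have hcomp : HasDerivAt (fun t => h (π - t)) (deriv h (π - θ) * (-1)) θ :=
      (hd1 _ hθ').comp θ hlin
    have hsum := (hd1 θ hθ).add hcomp
    have hconst : HasDerivAt (fun _ : ℝ => h 0 + h π) 0 θ := hasDerivAt_const θ _
    have heqn : (fun t => h t + h (π - t)) =ᶠ[nhds θ] (fun _ => h 0 + h π) :=
      Filter.eventually_of_mem (isOpen_Ioo.mem_nhds hθ) (fun t ht => hsym t ⟨ht.1.le, ht.2.le⟩)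
    have h0 := (hconst.congr_of_eventuallyEq heqn).unique hsum
    linarith
  -- pointwise symmetry of the product f·g
  have hfg_symm : ∀ θ ∈ Icc (0:ℝ) (π/2),
      (Real.cos (2*(π-θ)) - Real.cos (2*h (π-θ))
        - κ * Real.sin (2*h (π-θ) - 2*(π-θ)) * Real.sin (π-θ) * Real.cos (π-θ)) * g (π-θ)
      = (Real.cos (2*θ) - Real.cos (2*h θ)
          - κ * Real.sin (2*h θ - 2*θ) * Real.sin θ * Real.cos θ) * g θ := by
    intro θ ht
    rcases eq_or_lt_of_le ht.1 with h0 | h0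
    · rw [← h0]
      simp [hg, Real.sin_pi]
    · have hθI : θ ∈ Ioo (0:ℝ) π := ⟨h0, lt_of_le_of_lt ht.2 (half_lt_self pip)⟩
      have hπθ : h (π - θ) = ((m:ℝ) + n) * π - h θ := by
        have := hsym θ ⟨ht.1, hθI.2.le⟩
        rw [hm, hn] at this; linarith
      have e1 : Real.cos (2*(π-θ)) = Real.cos (2*θ) := by
        rw [show 2*(π-θ) = ((1:ℤ):ℝ)*(2*π) - 2*θ by push_cast; ring, cos_int_two_pi_sub']
      have e2 : Real.cos (2*h (π-θ)) = Real.cos (2*h θ) := by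
        rw [hπθ, show 2*(((m:ℝ)+n)*π - h θ) = ((m+n : ℤ):ℝ)*(2*π) - 2*h θ by push_cast; ring,
          cos_int_two_pi_sub']
      have e3 : Real.sin (2*h (π-θ) - 2*(π-θ)) = - Real.sin (2*h θ - 2*θ) := by
        rw [hπθ, show 2*(((m:ℝ)+n)*π - h θ) - 2*(π-θ)
          = ((m+n-1 : ℤ):ℝ)*(2*π) - (2*h θ - 2*θ) by push_cast; ring, sin_int_two_pi_sub']
      have e4 : g (π-θ) = g θ := by
        simp only [hg]
        rw [hsymd θ hθI, Real.sin_pi_sub]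
      rw [e1, e2, e3, e4, Real.sin_pi_sub, Real.cos_pi_sub]
      ring
  -- splitting the integral at π/2 and flipping
  have hhalf : (0:ℝ) ≤ π/2 := by positivity
  have hint_left : IntervalIntegrable (fun θ => (Real.cos (2*θ) - Real.cos (2*h θ)
      - κ * Real.sin (2*h θ - 2*θ) * Real.sin θ * Real.cos θ) * g θ) volume 0 (π/2) :=
    hfgint.mono_set (by rw [uIcc_of_le hhalf, uIcc_of_le pip.le]
                        exact Icc_subset_Icc le_rfl (by linarith))
  have hint_right : IntervalIntegrable (fun θ => (Real.cos (2*θ) - Real.cos (2*h θ)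
      - κ * Real.sin (2*h θ - 2*θ) * Real.sin θ * Real.cos θ) * g θ) volume (π/2) π :=
    hfgint.mono_set (by rw [uIcc_of_le (by linarith : π/2 ≤ π), uIcc_of_le pip.le]
                        exact Icc_subset_Icc hhalf le_rfl)
  have hflip : (∫ θ in (π/2:ℝ)..π, (Real.cos (2*θ) - Real.cos (2*h θ)
      - κ * Real.sin (2*h θ - 2*θ) * Real.sin θ * Real.cos θ) * g θ)
      = ∫ θ in (0:ℝ)..(π/2), (Real.cos (2*θ) - Real.cos (2*h θ)
          - κ * Real.sin (2*h θ - 2*θ) * Real.sin θ * Real.cos θ) * g θ := by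
    have hc := intervalIntegral.integral_comp_sub_left (a := 0) (b := π/2)
      (fun θ => (Real.cos (2*θ) - Real.cos (2*h θ)
        - κ * Real.sin (2*h θ - 2*θ) * Real.sin θ * Real.cos θ) * g θ) π
    rw [sub_zero, show π - π/2 = π/2 by ring] at hc
    rw [← hc]
    apply intervalIntegral.integral_congr
    intro t ht
    rw [uIcc_of_le hhalf] at ht
    exact hfg_symm t ht
  have hadj := intervalIntegral.integral_add_adjacent_intervals hint_left hint_right
  rw [hsplit, ← hadj, hflip]
  ring
end

section
/- Let κ = 4 and h(θ) = 2θ. Then the second variation δ²E[h](g) = ∫₀^π [g'(θ)²·sin θ + (cos(4θ)/sin²θ + 4·cos(2θ))·g(θ)²·sin θ] dθ satisfies δ²E[h](g₁) < 0 for g₁(θ) = sin θ and δ²E[h](g₂) > 0 for g₂(θ) = sin(2θ). In particular, the critical profile h(θ) = 2θ at κ = 4 is neither a local minimizer nor a local maximizer of the reduced energy. -/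
/-!
Both second variations reduce to integrals of trigonometric polynomials: multiplying the
potential `cos 4θ / sin² θ + 4 cos 2θ` by `g² sin θ` for `g = sin` or `g = sin 2θ` cancels the
singular factor, and the resulting densities are `-(7/4) sin θ + (5/4) sin 3θ` and
`sin θ - sin 3θ + 2 sin 5θ`. Since `∫₀^π sin nθ = 2/n` for odd `n`, the two values are
`-8/3 < 0` and `32/15 > 0`.
-/

open Real

theorem mul_div_sq_mul_sq (a s : ℝ) : a * s / s ^ 2 * s ^ 2 = a * s :=
  div_mul_cancel_of_imp fun hs => by simp [pow_eq_zero_iff two_ne_zero |>.mp hs]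

theorem deriv_sin_two_mul : deriv (fun θ : ℝ => sin (2 * θ)) = fun θ => 2 * cos (2 * θ) := by
  ext θ
  rw [deriv_sin (by fun_prop), deriv_const_mul_field', deriv_id'']
  ring

theorem integral_sin_nat_mul (n : ℕ) :
    ∫ θ in (0 : ℝ)..π, sin (n * θ) = (1 - (-1) ^ n) / n := by
  rcases eq_or_ne n 0 with rfl | hn
  · simp
  rw [intervalIntegral.integral_comp_mul_left (fun θ => sin θ) (Nat.cast_ne_zero.mpr hn),
    integral_sin, cos_nat_mul_pi, mul_zero, cos_zero, smul_eq_mul, inv_mul_eq_div]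

theorem integral_sin_nat_mul_of_odd {n : ℕ} (hn : Odd n) :
    ∫ θ in (0 : ℝ)..π, sin (n * θ) = 2 / n := by
  rw [integral_sin_nat_mul, hn.neg_one_pow]
  norm_num

/-- The density of the second variation of the reduced energy at `h θ = 2θ`, `κ = 4`. -/
noncomputable def secondVariationDensity (g : ℝ → ℝ) (θ : ℝ) : ℝ :=
  deriv g θ ^ 2 * sin θ + (cos (4 * θ) / sin θ ^ 2 + 4 * cos (2 * θ)) * g θ ^ 2 * sin θ

theorem secondVariationDensity_sin (θ : ℝ) :
    secondVariationDensity sin θ = -(7 / 4) * sin θ + 5 / 4 * sin (3 * θ) := by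
  have hdiv := mul_div_sq_mul_sq (cos (4 * θ)) (sin θ)
  rw [secondVariationDensity, Real.deriv_sin]
  rw [show (4 : ℝ) * θ = 2 * (2 * θ) by ring, cos_two_mul (2 * θ), cos_two_mul θ,
    sin_three_mul] at *
  linear_combination hdiv + (sin θ * (8 * cos θ ^ 2 + 1)) * sin_sq_add_cos_sq θ

theorem secondVariationDensity_sin_two_mul (θ : ℝ) :
    secondVariationDensity (fun θ => sin (2 * θ)) θ
      = sin θ - sin (3 * θ) + 2 * sin (5 * θ) := by
  have hdiv := mul_div_sq_mul_sq (4 * cos θ ^ 2 * cos (4 * θ)) (sin θ)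
  simp only [secondVariationDensity, deriv_sin_two_mul]
  rw [show (5 : ℝ) * θ = 2 * θ + 3 * θ by ring, sin_add, show (4 : ℝ) * θ = 2 * (2 * θ) by ring,
    cos_two_mul (2 * θ), cos_two_mul θ, sin_two_mul, sin_three_mul, cos_three_mul] at *
  linear_combination hdiv + (32 * sin θ * cos θ ^ 4 - 12 * sin θ) * sin_sq_add_cos_sq θ

theorem integral_secondVariationDensity_sin :
    ∫ θ in (0 : ℝ)..π, secondVariationDensity sin θ = -(8 / 3) := by
  have h3 : ∫ θ in (0 : ℝ)..π, sin (3 * θ) = 2 / 3 :=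
    mod_cast integral_sin_nat_mul_of_odd (n := 3) (by decide)
  simp only [secondVariationDensity_sin]
  rw [intervalIntegral.integral_add, intervalIntegral.integral_const_mul,
    intervalIntegral.integral_const_mul, h3, integral_sin]
  · norm_num
  all_goals exact Continuous.intervalIntegrable (by fun_prop) _ _

theorem integral_secondVariationDensity_sin_two_mul :
    ∫ θ in (0 : ℝ)..π, secondVariationDensity (fun θ => sin (2 * θ)) θ = 32 / 15 := by
  have h3 : ∫ θ in (0 : ℝ)..π, sin (3 * θ) = 2 / 3 :=
    mod_cast integral_sin_nat_mul_of_odd (n := 3) (by decide)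
  have h5 : ∫ θ in (0 : ℝ)..π, sin (5 * θ) = 2 / 5 :=
    mod_cast integral_sin_nat_mul_of_odd (n := 5) (by decide)
  simp only [secondVariationDensity_sin_two_mul]
  rw [intervalIntegral.integral_add, intervalIntegral.integral_sub,
    intervalIntegral.integral_const_mul, h3, h5, integral_sin]
  · norm_num
  all_goals exact Continuous.intervalIntegrable (by fun_prop) _ _

theorem kappa_four_saddle_point_general
    (g₁ g₂ : ℝ → ℝ)
    (hg₁ : g₁ = fun θ => Real.sin θ) (hg₂ : g₂ = fun θ => Real.sin (2 * θ)) :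
    (∫ θ in (0 : ℝ)..π,
        (deriv g₁ θ) ^ 2 * Real.sin θ
        + (Real.cos (4 * θ) / Real.sin θ ^ 2 + 4 * Real.cos (2 * θ))
          * (g₁ θ) ^ 2 * Real.sin θ) < 0 ∧
    0 < (∫ θ in (0 : ℝ)..π,
        (deriv g₂ θ) ^ 2 * Real.sin θ
        + (Real.cos (4 * θ) / Real.sin θ ^ 2 + 4 * Real.cos (2 * θ))
          * (g₂ θ) ^ 2 * Real.sin θ) := by
  subst hg₁ hg₂
  exact ⟨integral_secondVariationDensity_sin.trans_lt (by norm_num),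
    (by norm_num : (0 : ℝ) < 32 / 15).trans_eq integral_secondVariationDensity_sin_two_mul.symm⟩

/-- At κ = 4 the explicit critical profile h(θ) = 2θ has second variation that
    is negative in direction g₁ = sin and positive in direction g₂ = sin 2θ;
    hence it is a saddle point of the reduced energy. -/
theorem kappa_four_saddle_point
    (h g₁ g₂ : ℝ → ℝ) (hh : h = fun θ => 2 * θ)
    (hg₁ : g₁ = fun θ => Real.sin θ) (hg₂ : g₂ = fun θ => Real.sin (2 * θ)) :
    (∫ θ in (0 : ℝ)..π,
        (deriv g₁ θ) ^ 2 * Real.sin θ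
        + (Real.cos (4 * θ) / Real.sin θ ^ 2 + 4 * Real.cos (2 * θ))
          * (g₁ θ) ^ 2 * Real.sin θ) < 0 ∧
    0 < (∫ θ in (0 : ℝ)..π,
        (deriv g₂ θ) ^ 2 * Real.sin θ
        + (Real.cos (4 * θ) / Real.sin θ ^ 2 + 4 * Real.cos (2 * θ))
          * (g₂ θ) ^ 2 * Real.sin θ) :=
  kappa_four_saddle_point_general g₁ g₂ hg₁ hg₂
end
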